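/- arXiv:1208.4350 — 6 statements merged into one kernel-verified Lean document; each statement's English description precedes it below -/
import Mathlib

section
/- Let n ≥ 1 and let μ be a finite Borel measure on ℝ^n such that, for some A > 0, r₀ > 0, and α ∈ [0, n], one has μ(B(z,r)) ≤ A·r^α for all r ∈ (0, r₀) and all z ∈ ℝ^n (closed balls). Let f : ℝ^n → [0,∞] be Borel measurable and let p > max{1, n − α}. Then for every r ∈ (0, r₀): ∫_{B(0,r)} ∫_0^1 ∫_{ℝ^n} f(z + t·x) dμ(z) dt dx ≤ (A^{1/p}·p/(p − n + α)) · r^{α/p} · [ω_n·r^n·μ(ℝ^n)]^{(p-1)/p} · ‖f‖_{L^p(Ω)}, where Ω = N(spt μ, r) is the closed r-neighborhood of the support of μ, ω_n is the Lebesgue volume of the unit ball in ℝ^n, and the outer integral in x is with respect to Lebesgue measure on B(0,r). -/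
/-!
For fixed `t`, Fubini and the substitution `y = z + t • x` turn the inner integrals into
`t⁻ⁿ ∫ f(y) μ(B(y, t r)) dy`, whose integrand vanishes off `N(spt μ, r)`. With `q = p / (p - 1)`,
the bounds `μ(B(y, s))^q ≤ (A s^α)^(q-1) μ(B(y, s))` and `∫ μ(B(y, s)) dy = ω_n sⁿ μ(ℝⁿ)` let
Hölder's inequality bound this by a constant times `t^((α - n) / p)`, which is integrable on
`(0, 1]` precisely because `p > n - α`.
-/

open MeasureTheory Set Metric
open scoped ENNReal

def msupport {X : Type*} [TopologicalSpace X] [MeasurableSpace X] (μ : Measure X) :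
    Set X :=
  {x | ∀ U : Set X, IsOpen U → x ∈ U → 0 < μ U}

lemma msupport_eq_support {X : Type*} [TopologicalSpace X] [MeasurableSpace X]
    (μ : Measure X) : msupport μ = μ.support := by
  rw [Measure.support_eq_forall_isOpen]
  ext x
  exact forall_congr' fun U => forall_comm

section MetricSpace

variable {X : Type*} [PseudoMetricSpace X] [MeasurableSpace X] [SecondCountableTopology X]

lemma measure_closedBall_eq_zero_of_notMem_cthickening (μ : Measure X) {r s : ℝ} (hsr : s ≤ r)
    {y : X} (hy : y ∉ cthickening r (msupport μ)) : μ (closedBall y s) = 0 := by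
  have hball : closedBall y s ⊆ (msupport μ)ᶜ := fun w hw hw_supp => hy <|
    mem_cthickening_of_dist_le y w r _ hw_supp ((dist_comm y w ▸ mem_closedBall.1 hw).trans hsr)
  exact measure_mono_null hball (msupport_eq_support μ ▸ Measure.measure_compl_support)

variable [BorelSpace X]

lemma measurableSet_dist_le (s : ℝ) : MeasurableSet {q : X × X | dist q.1 q.2 ≤ s} :=
  (isClosed_le continuous_dist continuous_const).measurableSet

lemma measurable_measure_closedBall (μ : Measure X) [SFinite μ] (s : ℝ) :
    Measurable fun y => μ (closedBall y s) :=
  measurable_measure_prodMk_left (measurableSet_dist_le (X := X) s |>.preimage measurable_swap)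

lemma lintegral_setLIntegral_closedBall (μ ν : Measure X) [SFinite μ] [SFinite ν]
    {f : X → ℝ≥0∞} (hf : Measurable f) (s : ℝ) :
    ∫⁻ z, ∫⁻ y in closedBall z s, f y ∂ν ∂μ = ∫⁻ y, f y * μ (closedBall y s) ∂ν := by
  have hball : ∀ z y, (closedBall z s).indicator f y =
      {q : X × X | dist q.1 q.2 ≤ s}.indicator (fun q => f q.2) (z, y) := by
    intro z y
    simp only [indicator, mem_closedBall, mem_ofPred_eq, dist_comm y z]
  calc ∫⁻ z, ∫⁻ y in closedBall z s, f y ∂ν ∂μ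
      = ∫⁻ z, ∫⁻ y, {q : X × X | dist q.1 q.2 ≤ s}.indicator (fun q => f q.2) (z, y) ∂ν ∂μ := by
        simp_rw [← hball, lintegral_indicator measurableSet_closedBall]
    _ = ∫⁻ y, ∫⁻ z, (closedBall y s).indicator (fun _ => f y) z ∂μ ∂ν := by
        rw [lintegral_lintegral_swap (f := fun z y => {q : X × X | dist q.1 q.2 ≤ s}.indicator
          (fun q => f q.2) (z, y)) ((hf.comp measurable_snd).indicator
          (measurableSet_dist_le s)).aemeasurable]
        simp only [indicator, mem_closedBall, mem_ofPred_eq]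
    _ = ∫⁻ y, f y * μ (closedBall y s) ∂ν := by
        simp_rw [lintegral_indicator_const measurableSet_closedBall]

end MetricSpace

lemma lintegral_mul_le_of_ae_le {α : Type*} [MeasurableSpace α] {μ : Measure α} {p : ℝ}
    (hp : 1 < p) {f g : α → ℝ≥0∞} (hf : AEMeasurable f μ) (hg : AEMeasurable g μ) {c : ℝ≥0∞}
    (hgc : ∀ᵐ a ∂μ, g a ≤ c) :
    ∫⁻ a, f a * g a ∂μ ≤
      (∫⁻ a, f a ^ p ∂μ) ^ (1 / p) * c ^ (1 / p) * (∫⁻ a, g a ∂μ) ^ ((p - 1) / p) := by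
  obtain ⟨q, hpq⟩ : ∃ q, p.HolderConjugate q := ⟨_, .conjExponent hp⟩
  have hq1 : 0 ≤ q - 1 := sub_nonneg.2 hpq.symm.lt.le
  have hexp₁ : (q - 1) * (1 / q) = 1 / p := by
    rw [sub_mul, one_mul, mul_one_div_cancel hpq.symm.ne_zero, one_div, one_div,
      hpq.symm.one_sub_inv]
  have hexp₂ : 1 / q = (p - 1) / p := by
    rw [sub_div, div_self hpq.ne_zero, one_div, one_div, hpq.one_sub_inv]
  have hgq : ∫⁻ a, g a ^ q ∂μ ≤ c ^ (q - 1) * ∫⁻ a, g a ∂μ := by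
    rw [← lintegral_const_mul'' _ hg]
    refine lintegral_mono_ae (hgc.mono fun a ha => ?_)
    calc g a ^ q = g a ^ (q - 1) * g a ^ (1 : ℝ) := by
          rw [← ENNReal.rpow_add_of_nonneg _ _ hq1 zero_le_one, sub_add_cancel]
    _ ≤ c ^ (q - 1) * g a := by rw [ENNReal.rpow_one]; gcongr
  calc ∫⁻ a, f a * g a ∂μ ≤ (∫⁻ a, f a ^ p ∂μ) ^ (1 / p) * (∫⁻ a, g a ^ q ∂μ) ^ (1 / q) :=
        ENNReal.lintegral_mul_le_Lp_mul_Lq μ hpq hf hg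
    _ ≤ (∫⁻ a, f a ^ p ∂μ) ^ (1 / p) * (c ^ (q - 1) * ∫⁻ a, g a ∂μ) ^ (1 / q) := by
        gcongr
        exact hpq.symm.one_div_nonneg
    _ = (∫⁻ a, f a ^ p ∂μ) ^ (1 / p) * c ^ (1 / p) * (∫⁻ a, g a ∂μ) ^ ((p - 1) / p) := by
        rw [ENNReal.mul_rpow_of_nonneg _ _ hpq.symm.one_div_nonneg, ← ENNReal.rpow_mul, hexp₁,
          hexp₂, mul_assoc]

lemma rpow_scaling {A t r α p : ℝ} (d : ℕ) (hA : 0 ≤ A) (ht : 0 < t) (hr : 0 ≤ r) (hp : p ≠ 0) :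
    (t ^ d)⁻¹ * (A * (t * r) ^ α) ^ (1 / p) * (t ^ d) ^ ((p - 1) / p) =
      t ^ ((α - d) / p) * (A ^ (1 / p) * r ^ (α / p)) := by
  have hexp : -(d : ℝ) + α / p + d * ((p - 1) / p) = (α - d) / p := by
    field_simp
    ring
  rw [← hexp, Real.rpow_add ht, Real.rpow_add ht, Real.rpow_neg ht.le, Real.rpow_natCast,
    Real.rpow_natCast_mul ht.le, Real.mul_rpow hA (by positivity), Real.mul_rpow ht.le hr,
    Real.mul_rpow (by positivity) (by positivity), ← Real.rpow_mul ht.le, ← Real.rpow_mul hr,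
    mul_one_div]
  ring

lemma lintegral_Ioc_rpow {e : ℝ} (he : -1 < e) :
    ∫⁻ t in Ioc (0 : ℝ) 1, ENNReal.ofReal (t ^ e) = ENNReal.ofReal (1 / (e + 1)) := by
  have hint : IntegrableOn (fun t : ℝ => t ^ e) (Ioc 0 1) :=
    (intervalIntegral.intervalIntegrable_rpow' he).1
  have hnn : 0 ≤ᵐ[volume.restrict (Ioc (0 : ℝ) 1)] fun t => t ^ e :=
    ae_restrict_of_forall_mem measurableSet_Ioc fun t ht => Real.rpow_nonneg ht.1.le _
  rw [← ofReal_integral_eq_lintegral_ofReal hint hnn, ← intervalIntegral.integral_of_le zero_le_one,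
    integral_rpow (.inl he), Real.one_rpow, Real.zero_rpow (by linarith), sub_zero]

section AddHaar

variable {E : Type*} [NormedAddCommGroup E] [NormedSpace ℝ E] [FiniteDimensional ℝ E]
  [MeasurableSpace E] [BorelSpace E] (ν : Measure E) [ν.IsAddHaarMeasure]

open Module

lemma lintegral_comp_add_smul (f : E → ℝ≥0∞) (z : E) {t : ℝ} (ht : 0 < t) :
    ∫⁻ x, f (z + t • x) ∂ν = ENNReal.ofReal ((t ^ finrank ℝ E)⁻¹) * ∫⁻ y, f y ∂ν := by
  let e : E ≃ᵐ E := (Homeomorph.smul (Units.mk0 t ht.ne')).toMeasurableEquiv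
  calc ∫⁻ x, f (z + t • x) ∂ν
      = ∫⁻ y, f (z + y) ∂(ν.map (t • ·)) := (lintegral_map_equiv (fun y => f (z + y)) e).symm
    _ = ENNReal.ofReal ((t ^ finrank ℝ E)⁻¹) * ∫⁻ y, f y ∂ν := by
        rw [Measure.map_addHaar_smul ν ht.ne', lintegral_smul_measure,
          abs_of_pos (by positivity), smul_eq_mul, lintegral_add_left_eq_self]

lemma setLIntegral_closedBall_comp_add_smul (f : E → ℝ≥0∞) (z : E) {t : ℝ} (ht : 0 < t)
    (r : ℝ) :
    ∫⁻ x in closedBall 0 r, f (z + t • x) ∂ν =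
      ENNReal.ofReal ((t ^ finrank ℝ E)⁻¹) * ∫⁻ y in closedBall z (t * r), f y ∂ν := by
  have hpre : (z + t • ·) ⁻¹' closedBall z (t * r) = closedBall (0 : E) r := by
    ext x
    simp only [mem_preimage, mem_closedBall, dist_eq_norm, add_sub_cancel_left, sub_zero,
      norm_smul, Real.norm_eq_abs, abs_of_pos ht, mul_le_mul_iff_right₀ ht]
  rw [← lintegral_indicator measurableSet_closedBall,
    ← lintegral_indicator measurableSet_closedBall, ← lintegral_comp_add_smul ν _ z ht]
  congr 1 with x
  rw [← hpre]
  exact indicator_comp_right _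

lemma lintegral_measure_closedBall_addHaar (μ : Measure E) [SFinite μ] {s : ℝ} (hs : 0 ≤ s) :
    ∫⁻ y, μ (closedBall y s) ∂ν = ENNReal.ofReal (s ^ finrank ℝ E) * ν (ball 0 1) * μ univ := by
  have h := lintegral_setLIntegral_closedBall μ ν (measurable_const (a := (1 : ℝ≥0∞))) s
  simp only [one_mul, setLIntegral_const, Measure.addHaar_closedBall ν _ hs] at h
  rw [← h, lintegral_const]

lemma setLIntegral_closedBall_lintegral_comp_add_smul (μ : Measure E) [SFinite μ]
    {f : E → ℝ≥0∞} (hf : Measurable f) {t : ℝ} (ht : 0 < t) (r : ℝ) :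
    ∫⁻ x in closedBall 0 r, ∫⁻ z, f (z + t • x) ∂μ ∂ν =
      ENNReal.ofReal ((t ^ finrank ℝ E)⁻¹) * ∫⁻ y, f y * μ (closedBall y (t * r)) ∂ν := by
  have hmeas : Measurable fun q : E × E => f (q.2 + t • q.1) := by fun_prop
  rw [lintegral_lintegral_swap hmeas.aemeasurable]
  simp_rw [setLIntegral_closedBall_comp_add_smul ν _ _ ht]
  rw [lintegral_const_mul' _ _ ENNReal.ofReal_ne_top, lintegral_setLIntegral_closedBall μ ν hf]

lemma lintegral_mul_measure_closedBall_le (μ : Measure E) [SFinite μ] {f : E → ℝ≥0∞}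
    (hf : Measurable f) {p r s : ℝ} (hp : 1 < p) (hs : 0 ≤ s) (hsr : s ≤ r) {c : ℝ≥0∞}
    (hc : ∀ y, μ (closedBall y s) ≤ c) :
    ∫⁻ y, f y * μ (closedBall y s) ∂ν ≤
      (∫⁻ y in cthickening r (msupport μ), f y ^ p ∂ν) ^ (1 / p) * c ^ (1 / p) *
        (ENNReal.ofReal (s ^ finrank ℝ E) * ν (ball 0 1) * μ univ) ^ ((p - 1) / p) := by
  have hsupp : (fun y => f y * μ (closedBall y s)).support ⊆ cthickening r (msupport μ) :=
    Function.support_subset_iff'.2 fun y hy => by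
      rw [measure_closedBall_eq_zero_of_notMem_cthickening μ hsr hy, mul_zero]
  rw [← setLIntegral_eq_of_support_subset hsupp, ← lintegral_measure_closedBall_addHaar ν μ hs]
  refine (lintegral_mul_le_of_ae_le hp hf.aemeasurable
    (measurable_measure_closedBall μ s).aemeasurable (ae_of_all _ hc)).trans ?_
  gcongr
  exact Measure.restrict_le_self

lemma setLIntegral_closedBall_lintegral_comp_add_smul_le (μ : Measure E) [SFinite μ]
    {f : E → ℝ≥0∞} (hf : Measurable f) {A α p r t : ℝ} (hA : 0 ≤ A) (hp : 1 < p) (hr : 0 ≤ r)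
    (ht : 0 < t) (ht1 : t ≤ 1)
    (hgrowth : ∀ y, μ (closedBall y (t * r)) ≤ ENNReal.ofReal (A * (t * r) ^ α)) :
    ∫⁻ x in closedBall 0 r, ∫⁻ z, f (z + t • x) ∂μ ∂ν ≤
      ENNReal.ofReal (t ^ ((α - finrank ℝ E) / p)) *
        (ENNReal.ofReal (A ^ (1 / p) * r ^ (α / p)) *
          (ν (ball 0 1) * ENNReal.ofReal (r ^ finrank ℝ E) * μ univ) ^ ((p - 1) / p) *
          (∫⁻ y in cthickening r (msupport μ), f y ^ p ∂ν) ^ (1 / p)) := by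
  set d := finrank ℝ E
  set K := ∫⁻ y in cthickening r (msupport μ), f y ^ p ∂ν
  set W := ν (ball 0 1) * ENNReal.ofReal (r ^ d) * μ univ
  have hp₀ : 0 < p := zero_lt_one.trans hp
  have hp' : 0 ≤ (p - 1) / p := div_nonneg (sub_nonneg.2 hp.le) hp₀.le
  have hsplit : ENNReal.ofReal ((t * r) ^ d) * ν (ball 0 1) * μ univ =
      ENNReal.ofReal (t ^ d) * W := by
    rw [mul_pow, ENNReal.ofReal_mul (by positivity)]
    ring
  rw [setLIntegral_closedBall_lintegral_comp_add_smul ν μ hf ht]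
  calc ENNReal.ofReal ((t ^ d)⁻¹) * ∫⁻ y, f y * μ (closedBall y (t * r)) ∂ν
      ≤ ENNReal.ofReal ((t ^ d)⁻¹) * (K ^ (1 / p) * ENNReal.ofReal (A * (t * r) ^ α) ^ (1 / p) *
          (ENNReal.ofReal ((t * r) ^ d) * ν (ball 0 1) * μ univ) ^ ((p - 1) / p)) := by
        gcongr
        exact lintegral_mul_measure_closedBall_le ν μ hf hp (by positivity)
          (mul_le_of_le_one_left hr ht1) hgrowth
    _ = ENNReal.ofReal ((t ^ d)⁻¹ * (A * (t * r) ^ α) ^ (1 / p) * (t ^ d) ^ ((p - 1) / p)) *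
          (W ^ ((p - 1) / p) * K ^ (1 / p)) := by
        rw [hsplit, ENNReal.mul_rpow_of_nonneg _ _ hp',
          ENNReal.ofReal_rpow_of_nonneg (by positivity) hp',
          ENNReal.ofReal_rpow_of_nonneg (by positivity) (by positivity),
          ENNReal.ofReal_mul (by positivity), ENNReal.ofReal_mul (by positivity)]
        ring
    _ = _ := by
        rw [rpow_scaling d hA ht hr hp₀.ne', ENNReal.ofReal_mul (by positivity)]
        ring

end AddHaar

theorem stmt3_general (n : ℕ)
    (μ : Measure (EuclideanSpace ℝ (Fin n))) [IsFiniteMeasure μ]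
    (A r₀ α : ℝ) (hA : 0 < A)
    (hgrowth : ∀ (z : EuclideanSpace ℝ (Fin n)) (r : ℝ), 0 < r → r < r₀ →
      μ (closedBall z r) ≤ ENNReal.ofReal (A * r ^ α))
    (f : EuclideanSpace ℝ (Fin n) → ℝ≥0∞) (hf : Measurable f)
    (p : ℝ) (hp : max 1 ((n : ℝ) - α) < p)
    (r : ℝ) (hr : 0 < r) (hrr₀ : r < r₀) :
    (∫⁻ x in closedBall (0 : EuclideanSpace ℝ (Fin n)) r,
        ∫⁻ t in Icc (0 : ℝ) 1, ∫⁻ z, f (z + t • x) ∂μ ∂volume ∂volume) ≤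
      ENNReal.ofReal (A ^ (1 / p) * p / (p - n + α) * r ^ (α / p)) *
        (volume (ball (0 : EuclideanSpace ℝ (Fin n)) 1) * ENNReal.ofReal (r ^ n) *
            μ univ) ^ ((p - 1) / p) *
        (∫⁻ x in cthickening r (msupport μ), f x ^ p ∂volume) ^ (1 / p) := by
  have hp₁ : 1 < p := (le_max_left _ _).trans_lt hp
  have hpnα : 0 < p - n + α := by linarith [(le_max_right 1 ((n : ℝ) - α)).trans_lt hp]
  have he : -1 < (α - n) / p := by rw [lt_div_iff₀ (by linarith)]; linarith
  have hbound : ∀ t ∈ Ioc (0 : ℝ) 1,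
      ∫⁻ x in closedBall 0 r, ∫⁻ z, f (z + t • x) ∂μ ∂volume ≤
        ENNReal.ofReal (t ^ ((α - n) / p)) *
          (ENNReal.ofReal (A ^ (1 / p) * r ^ (α / p)) *
            (volume (ball (0 : EuclideanSpace ℝ (Fin n)) 1) * ENNReal.ofReal (r ^ n) *
              μ univ) ^ ((p - 1) / p) *
            (∫⁻ x in cthickening r (msupport μ), f x ^ p ∂volume) ^ (1 / p)) := fun t ht => by
    simpa only [finrank_euclideanSpace_fin] using
      setLIntegral_closedBall_lintegral_comp_add_smul_le volume μ hf hA.le hp₁ hr.le ht.1 ht.2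
        fun y => hgrowth y _ (mul_pos ht.1 hr) ((mul_le_of_le_one_left hr.le ht.2).trans_lt hrr₀)
  have hmeas : Measurable fun q : EuclideanSpace ℝ (Fin n) × ℝ => ∫⁻ z, f (z + q.2 • q.1) ∂μ :=
    (hf.comp (continuous_snd.add (continuous_fst.snd.smul continuous_fst.fst)).measurable
      ).lintegral_prod_right'
  rw [lintegral_lintegral_swap hmeas.aemeasurable, Measure.restrict_congr_set Ioc_ae_eq_Icc.symm]
  refine (setLIntegral_mono ?_ hbound).trans_eq ?_
  · fun_prop
  have hfrac : 1 / ((α - n) / p + 1) = p / (p - n + α) := by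
    rw [div_add_one (by linarith), one_div_div]
    ring
  rw [lintegral_mul_const _ (by fun_prop), lintegral_Ioc_rpow he, hfrac, ← mul_assoc, ← mul_assoc,
    ← ENNReal.ofReal_mul (by positivity)]
  congr 3
  ring

/-- Let `μ` be a finite Borel measure on `ℝ^n` with
`μ(B(z,r)) ≤ A·r^α` for all `r ∈ (0,r₀)` and `z` (closed balls), `0 ≤ α ≤ n`,
`f : ℝ^n → [0,∞]` Borel and `p > max{1, n-α}`. Then for every `r ∈ (0,r₀)`:
`∫_{B(0,r)} ∫_0^1 ∫ f(z + t·x) dμ(z) dt dx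
  ≤ (A^{1/p}·p/(p-n+α)) · r^{α/p} · [ω_n·r^n·μ(ℝ^n)]^{(p-1)/p} · ‖f‖_{L^p(N(spt μ, r))}`. -/
theorem stmt3 (n : ℕ) (hn : 1 ≤ n)
    (μ : Measure (EuclideanSpace ℝ (Fin n))) [IsFiniteMeasure μ]
    (A r₀ α : ℝ) (hA : 0 < A) (hr₀ : 0 < r₀) (hα0 : 0 ≤ α) (hαn : α ≤ n)
    (hgrowth : ∀ (z : EuclideanSpace ℝ (Fin n)) (r : ℝ), 0 < r → r < r₀ →
      μ (closedBall z r) ≤ ENNReal.ofReal (A * r ^ α))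
    (f : EuclideanSpace ℝ (Fin n) → ℝ≥0∞) (hf : Measurable f)
    (p : ℝ) (hp : max 1 ((n : ℝ) - α) < p)
    (r : ℝ) (hr : 0 < r) (hrr₀ : r < r₀) :
    (∫⁻ x in closedBall (0 : EuclideanSpace ℝ (Fin n)) r,
        ∫⁻ t in Icc (0 : ℝ) 1, ∫⁻ z, f (z + t • x) ∂μ ∂volume ∂volume) ≤
      ENNReal.ofReal (A ^ (1 / p) * p / (p - n + α) * r ^ (α / p)) *
        (volume (ball (0 : EuclideanSpace ℝ (Fin n)) 1) * ENNReal.ofReal (r ^ n) *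
            μ univ) ^ ((p - 1) / p) *
        (∫⁻ x in cthickening r (msupport μ), f x ^ p ∂volume) ^ (1 / p) :=
  stmt3_general n μ A r₀ α hA hgrowth f hf p hp r hr hrr₀
end

section
/- Let (X,d) be a metric space and μ a Borel measure on X. Let 1 < Q < ∞ and suppose μ(B(x,r)) ≤ C·r^Q for all x ∈ X and r > 0 (closed balls), where C > 0 is a fixed constant. Let A ⊆ X be a compact set whose Hausdorff dimension satisfies dim_H(A) < Q − 1. Then M_1(Γ_A) = 0, where Γ_A is the family of all curves parametrized by arc length whose image intersects A; that is, for every ε > 0 there exists a Borel function ρ : X → [0,∞] with ∫_X ρ dμ ≤ ε such that ∫_0^L ρ(c(t)) dt ≥ 1 for every L > 0 and every curve c : [0,L] → X parametrized by arc length with image meeting A. -/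
open MeasureTheory Set Metric
open scoped ENNReal

/-!
Since `dimH A < Q - 1`, the set `A` is `μH[s]`-null for some `0 < s < Q - 1`, so at every scale
`1 / (j + 1)` it is covered by balls `B(x, r)` with `∑ r ^ s` as small as we like. The density
`r⁻¹ · 1_{B(x, 2r)}` has integral at most `C 2^Q r^(Q-1) ≤ C 2^Q r^s` by the growth bound, while a
1-Lipschitz curve of length `L ≥ r` meeting `B(x, r)` spends time at least `r` in `B(x, 2r)` and so
collects at least `1` from it. Summing these densities over all balls at all scales gives `ρ`.
-/

/-- A curve `c : [0,L] → X` parametrized by arc length: `c` is 1-Lipschitz on `[0,L]`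
and its length (total variation) on each subinterval `[s,t] ⊆ [0,L]` equals `t - s`. -/
def IsArcLengthParam {X : Type*} [PseudoMetricSpace X] (L : ℝ) (c : ℝ → X) : Prop :=
  LipschitzOnWith 1 c (Icc 0 L) ∧
    ∀ s t : ℝ, 0 ≤ s → s ≤ t → t ≤ L →
      eVariationOn c (Icc s t) = ENNReal.ofReal (t - s)

theorem exists_hausdorffMeasure_eq_zero_of_dimH_lt {X : Type*} [EMetricSpace X] [MeasurableSpace X]
    [BorelSpace X] {A : Set X} {q : ℝ} (h : dimH A < ENNReal.ofReal q) :
    ∃ s : ℝ, 0 < s ∧ s < q ∧ μH[s] A = 0 := by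
  obtain ⟨b, hAb, hbq⟩ := exists_between h
  have hb : b ≠ ∞ := (hbq.trans ENNReal.ofReal_lt_top).ne
  refine ⟨b.toReal, ENNReal.toReal_pos (pos_of_gt hAb).ne' hb,
    ENNReal.toReal_lt_of_lt_ofReal hbq, ?_⟩
  exact hausdorffMeasure_of_dimH_lt (d := b.toNNReal) (by rwa [ENNReal.coe_toNNReal hb])

section Cover

variable {X : Type*} [MetricSpace X] [MeasurableSpace X] [BorelSpace X] {A : Set X} {s δ : ℝ}
  {κ : ℝ≥0∞}

theorem exists_closedBall_cover_of_hausdorffMeasure_eq_zero (hs : 0 < s) (h0 : μH[s] A = 0)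
    (hA : A.Nonempty) (hδ : 0 < δ) (hκ : κ ≠ 0) :
    ∃ (x : ℕ → X) (r : ℕ → ℝ), (∀ n, 0 ≤ r n ∧ r n ≤ δ) ∧
      A ⊆ ⋃ n, closedBall (x n) (r n) ∧ ∑' n, ENNReal.ofReal (r n ^ s) < κ := by
  have hlt : ⨅ (t : ℕ → Set X) (_ : A ⊆ ⋃ n, t n) (_ : ∀ n, ediam (t n) ≤ ENNReal.ofReal δ),
      ∑' n, ⨆ _ : (t n).Nonempty, ediam (t n) ^ s < κ := by
    refine lt_of_le_of_lt ?_ (pos_iff_ne_zero.2 hκ)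
    rw [← h0, Measure.hausdorffMeasure_apply]
    exact le_iSup₂ (f := fun r (_ : 0 < r) => ⨅ (t : ℕ → Set X) (_ : A ⊆ ⋃ n, t n)
      (_ : ∀ n, ediam (t n) ≤ r), ∑' n, ⨆ _ : (t n).Nonempty, ediam (t n) ^ s)
      _ (ENNReal.ofReal_pos.2 hδ)
  simp only [iInf_lt_iff] at hlt
  obtain ⟨t, hcov, hdiam, hsum⟩ := hlt
  have hfin n : ediam (t n) ≠ ∞ := ((hdiam n).trans_lt ENNReal.ofReal_lt_top).ne
  classical
  refine ⟨fun n => if h : (t n).Nonempty then h.some else hA.some, fun n => (ediam (t n)).toReal,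
    fun n => ⟨ENNReal.toReal_nonneg, ENNReal.toReal_le_of_le_ofReal hδ.le (hdiam n)⟩, ?_, ?_⟩
  · intro a ha
    obtain ⟨n, hn⟩ := mem_iUnion.1 (hcov ha)
    have hne : (t n).Nonempty := ⟨a, hn⟩
    refine mem_iUnion.2 ⟨n, ?_⟩
    simp only [dif_pos hne, mem_closedBall, dist_edist]
    exact ENNReal.toReal_mono (hfin n) (edist_le_ediam_of_mem hn hne.some_mem)
  · refine lt_of_le_of_lt (ENNReal.tsum_le_tsum fun n => ?_) hsum
    rcases (t n).eq_empty_or_nonempty with hn | hn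
    · simp [hn, Real.zero_rpow hs.ne']
    · rw [iSup_pos hn, ← ENNReal.ofReal_rpow_of_nonneg ENNReal.toReal_nonneg hs.le,
        ENNReal.ofReal_toReal (hfin n)]

theorem exists_pos_closedBall_cover_of_hausdorffMeasure_eq_zero (hs : 0 < s) (h0 : μH[s] A = 0)
    (hA : A.Nonempty) (hδ : 0 < δ) (hκ : κ ≠ 0) :
    ∃ (x : ℕ → X) (r : ℕ → ℝ), (∀ n, 0 < r n ∧ r n ≤ δ) ∧
      A ⊆ ⋃ n, closedBall (x n) (r n) ∧ ∑' n, ENNReal.ofReal (r n ^ s) < κ := by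
  have hκ₂ : κ / 2 ≠ 0 := (ENNReal.half_pos hκ).ne'
  obtain ⟨x, r, hr, hcov, hsum⟩ :=
    exists_closedBall_cover_of_hausdorffMeasure_eq_zero hs h0 hA hδ hκ₂
  obtain ⟨v, hv0, hv⟩ := ENNReal.exists_pos_sum_of_countable hκ₂ ℕ
  set η : ℕ → ℝ := fun n => min δ ((v n : ℝ) ^ s⁻¹)
  have hη0 n : 0 < η n := lt_min hδ (Real.rpow_pos_of_pos (hv0 n) _)
  have hηs n : ENNReal.ofReal (η n ^ s) ≤ v n := by
    calc ENNReal.ofReal (η n ^ s) ≤ ENNReal.ofReal (((v n : ℝ) ^ s⁻¹) ^ s) :=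
          ENNReal.ofReal_le_ofReal <| Real.rpow_le_rpow (hη0 n).le (min_le_right _ _) hs.le
      _ = v n := by
          rw [← Real.rpow_mul (v n).coe_nonneg, inv_mul_cancel₀ hs.ne', Real.rpow_one,
            ENNReal.ofReal_coe_nnreal]
  refine ⟨x, fun n => max (r n) (η n),
    fun n => ⟨lt_max_of_lt_right (hη0 n), max_le (hr n).2 (min_le_left _ _)⟩,
    hcov.trans (iUnion_mono fun n => closedBall_subset_closedBall (le_max_left _ _)), ?_⟩
  calc ∑' n, ENNReal.ofReal (max (r n) (η n) ^ s)
      ≤ ∑' n, (ENNReal.ofReal (r n ^ s) + v n) := by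
        refine ENNReal.tsum_le_tsum fun n => ?_
        rcases le_total (r n) (η n) with h | h
        · rw [max_eq_right h]; exact le_add_left (hηs n)
        · rw [max_eq_left h]; exact le_add_right le_rfl
    _ = ∑' n, ENNReal.ofReal (r n ^ s) + ∑' n, (v n : ℝ≥0∞) := ENNReal.tsum_add
    _ < κ / 2 + κ / 2 := ENNReal.add_lt_add hsum hv
    _ = κ := ENNReal.add_halves κ

end Cover

section BallDensity

variable {X : Type*} [PseudoMetricSpace X]

noncomputable def ballDensity (x : X) (r : ℝ) : X → ℝ≥0∞ :=
  (closedBall x (2 * r)).indicator fun _ => (ENNReal.ofReal r)⁻¹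

theorem measurable_ballDensity [MeasurableSpace X] [OpensMeasurableSpace X] (x : X) (r : ℝ) :
    Measurable (ballDensity x r) :=
  measurable_const.indicator measurableSet_closedBall

theorem lintegral_ballDensity_le [MeasurableSpace X] [OpensMeasurableSpace X] {μ : Measure X}
    {Q C s r : ℝ} {x : X} (hball : μ (closedBall x (2 * r)) ≤ ENNReal.ofReal (C * (2 * r) ^ Q))
    (hsQ : s ≤ Q - 1) (hr0 : 0 < r) (hr1 : r ≤ 1) :
    ∫⁻ y, ballDensity x r y ∂μ ≤ ENNReal.ofReal (C * 2 ^ Q) * ENNReal.ofReal (r ^ s) := by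
  have hsplit : C * (2 * r) ^ Q = C * 2 ^ Q * r ^ (Q - 1) * r := by
    rw [Real.mul_rpow zero_le_two hr0.le, Real.rpow_sub_one hr0.ne']
    field_simp
  rw [ballDensity, lintegral_indicator_const measurableSet_closedBall]
  calc (ENNReal.ofReal r)⁻¹ * μ (closedBall x (2 * r))
      ≤ (ENNReal.ofReal r)⁻¹ *
          (ENNReal.ofReal (C * 2 ^ Q) * ENNReal.ofReal (r ^ (Q - 1)) * ENNReal.ofReal r) := by
        rw [← ENNReal.ofReal_mul' (by positivity), ← ENNReal.ofReal_mul' hr0.le, ← hsplit]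
        gcongr
    _ = ENNReal.ofReal (C * 2 ^ Q) * ENNReal.ofReal (r ^ (Q - 1)) := by
        rw [mul_comm, mul_assoc, ENNReal.mul_inv_cancel (ENNReal.ofReal_pos.2 hr0).ne'
          ENNReal.ofReal_ne_top, mul_one]
    _ ≤ ENNReal.ofReal (C * 2 ^ Q) * ENNReal.ofReal (r ^ s) :=
        mul_le_mul_right
          (ENNReal.ofReal_le_ofReal (Real.rpow_le_rpow_of_exponent_ge hr0 hr1 hsQ)) _

theorem one_le_setLIntegral_ballDensity_comp {c : ℝ → X} {L t₀ r : ℝ} {x : X}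
    (hc : LipschitzOnWith 1 c (Icc 0 L)) (ht₀ : t₀ ∈ Icc 0 L) (hx : dist (c t₀) x ≤ r)
    (hr : 0 < r) (hrL : r ≤ L) :
    1 ≤ ∫⁻ t in Icc 0 L, ballDensity x r (c t) := by
  set m := min t₀ (L - r)
  have hsub : Icc m (m + r) ⊆ Icc 0 L :=
    Icc_subset_Icc (le_min ht₀.1 (by linarith)) (by linarith [min_le_right t₀ (L - r)])
  have hm : t₀ - r ≤ m := le_min (by linarith) (by linarith [ht₀.2])
  have hnear : ∀ t ∈ Icc m (m + r), dist t t₀ ≤ r := fun t ht => by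
    rw [Real.dist_eq, abs_le]
    constructor <;> linarith [ht.1, ht.2, min_le_left t₀ (L - r)]
  have hin : ∀ t ∈ Icc m (m + r), c t ∈ closedBall x (2 * r) := fun t ht => by
    rw [mem_closedBall, two_mul]
    calc dist (c t) x ≤ dist (c t) (c t₀) + dist (c t₀) x := dist_triangle _ _ _
      _ ≤ r + r := add_le_add ((hc.dist_le_mul t (hsub ht) t₀ ht₀).trans
          (by simpa using hnear t ht)) hx
  calc (1 : ℝ≥0∞) = ∫⁻ _ in Icc m (m + r), (ENNReal.ofReal r)⁻¹ := by
        rw [setLIntegral_const, Real.volume_Icc, add_sub_cancel_left,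
          ENNReal.inv_mul_cancel (ENNReal.ofReal_pos.2 hr).ne' ENNReal.ofReal_ne_top]
    _ ≤ ∫⁻ t in Icc m (m + r), ballDensity x r (c t) :=
        setLIntegral_mono' measurableSet_Icc fun t ht => by
          rw [ballDensity, indicator_of_mem (hin t ht)]
    _ ≤ ∫⁻ t in Icc 0 L, ballDensity x r (c t) := lintegral_mono_set hsub

theorem lintegral_tsum_ballDensity_le {ι : Type*} [MeasurableSpace X]
    [OpensMeasurableSpace X] [Countable ι] {μ : Measure X} {Q C s : ℝ}
    (hgrowth : ∀ (x : X) (r : ℝ), 0 < r → μ (closedBall x r) ≤ ENNReal.ofReal (C * r ^ Q))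
    (hsQ : s ≤ Q - 1) {x : ι → X} {r : ι → ℝ} (hr : ∀ i, 0 < r i ∧ r i ≤ 1) :
    ∫⁻ y, ∑' i, ballDensity (x i) (r i) y ∂μ ≤
      ENNReal.ofReal (C * 2 ^ Q) * ∑' i, ENNReal.ofReal (r i ^ s) := by
  rw [lintegral_tsum fun i => (measurable_ballDensity _ _).aemeasurable, ← ENNReal.tsum_mul_left]
  exact ENNReal.tsum_le_tsum fun i => lintegral_ballDensity_le
    (hgrowth _ _ (mul_pos two_pos (hr i).1)) hsQ (hr i).1 (hr i).2

end BallDensity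

theorem stmt6_general {X : Type*} [MetricSpace X] [MeasurableSpace X] [BorelSpace X]
    (μ : Measure X) (Q C : ℝ)
    (hgrowth : ∀ (x : X) (r : ℝ), 0 < r →
      μ (closedBall x r) ≤ ENNReal.ofReal (C * r ^ Q))
    (A : Set X) (hdim : dimH A < ENNReal.ofReal (Q - 1)) :
    ∀ ε : ℝ≥0∞, 0 < ε → ∃ ρ : X → ℝ≥0∞, Measurable ρ ∧
      (∫⁻ x, ρ x ∂μ) ≤ ε ∧
      ∀ L : ℝ, 0 < L → ∀ c : ℝ → X, IsArcLengthParam L c →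
        (∃ t ∈ Icc 0 L, c t ∈ A) →
        1 ≤ ∫⁻ t in Icc 0 L, ρ (c t) ∂volume := by
  intro ε hε
  rcases A.eq_empty_or_nonempty with rfl | hA
  · exact ⟨0, measurable_const, by simp, fun _ _ _ _ ⟨_, _, ht⟩ => ht.elim⟩
  obtain ⟨s, hs, hsQ, hAs⟩ := exists_hausdorffMeasure_eq_zero_of_dimH_lt hdim
  -- `K = 0` when `C ≤ 0`; then `ε / K = ∞` and the final step `K * (ε / K) ≤ ε` still holds.
  set K := ENNReal.ofReal (C * 2 ^ Q)
  have hεK : ε / K ≠ 0 := (ENNReal.div_pos hε.ne' ENNReal.ofReal_ne_top).ne'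
  obtain ⟨w, hw, hwε⟩ := ENNReal.exists_pos_sum_of_countable' hεK ℕ
  choose x r hr hcov hsum using fun j : ℕ =>
    exists_pos_closedBall_cover_of_hausdorffMeasure_eq_zero hs hAs hA
      (Nat.one_div_pos_of_nat (n := j)) (hw j).ne'
  have hr1 (p : ℕ × ℕ) : 0 < r p.1 p.2 ∧ r p.1 p.2 ≤ 1 :=
    ⟨(hr p.1 p.2).1, (hr p.1 p.2).2.trans (div_le_one_of_le₀ (by simp) (by positivity))⟩
  refine ⟨fun y => ∑' p : ℕ × ℕ, ballDensity (x p.1 p.2) (r p.1 p.2) y,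
    Measurable.tsum fun _ => measurable_ballDensity _ _, ?_, ?_⟩
  · calc ∫⁻ y, ∑' p : ℕ × ℕ, ballDensity (x p.1 p.2) (r p.1 p.2) y ∂μ
        ≤ K * ∑' p : ℕ × ℕ, ENNReal.ofReal (r p.1 p.2 ^ s) :=
          lintegral_tsum_ballDensity_le hgrowth hsQ.le hr1
      _ ≤ K * (ε / K) := by
          rw [ENNReal.tsum_prod (f := fun j n => ENNReal.ofReal (r j n ^ s))]
          gcongr
          exact (ENNReal.tsum_le_tsum fun j => (hsum j).le).trans hwε.le
      _ ≤ ε := ENNReal.mul_div_le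
  · rintro L hL c hc ⟨t₀, ht₀, hA₀⟩
    obtain ⟨j, hj⟩ := exists_nat_one_div_lt hL
    obtain ⟨n, hn⟩ := mem_iUnion.1 (hcov j hA₀)
    calc 1 ≤ ∫⁻ t in Icc 0 L, ballDensity (x j n) (r j n) (c t) :=
          one_le_setLIntegral_ballDensity_comp hc.1 ht₀ hn (hr j n).1 ((hr j n).2.trans hj.le)
      _ ≤ _ := lintegral_mono fun t => ENNReal.le_tsum (f := fun p : ℕ × ℕ =>
          ballDensity (x p.1 p.2) (r p.1 p.2) (c t)) (j, n)

/-- Let `(X,d)` be a metric space, `μ` a Borel measure with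
`μ(B(x,r)) ≤ C·r^Q` (closed balls), `1 < Q`, and `A ⊆ X` compact with Hausdorff
dimension `dim_H(A) < Q - 1`. Then the family of arc-length parametrized curves
meeting `A` has zero `1`-modulus: for every `ε > 0` there is a Borel `ρ : X → [0,∞]`
with `∫ ρ dμ ≤ ε` and `∫_0^L ρ(c(t)) dt ≥ 1` for every arc-length parametrized curve
`c : [0,L] → X` whose image meets `A`. -/
theorem stmt6 {X : Type*} [MetricSpace X] [MeasurableSpace X] [BorelSpace X]
    (μ : Measure X) (Q C : ℝ) (hQ : 1 < Q) (hC : 0 < C)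
    (hgrowth : ∀ (x : X) (r : ℝ), 0 < r →
      μ (closedBall x r) ≤ ENNReal.ofReal (C * r ^ Q))
    (A : Set X) (hAc : IsCompact A) (hdim : dimH A < ENNReal.ofReal (Q - 1)) :
    ∀ ε : ℝ≥0∞, 0 < ε → ∃ ρ : X → ℝ≥0∞, Measurable ρ ∧
      (∫⁻ x, ρ x ∂μ) ≤ ε ∧
      ∀ L : ℝ, 0 < L → ∀ c : ℝ → X, IsArcLengthParam L c →
        (∃ t ∈ Icc 0 L, c t ∈ A) →
        1 ≤ ∫⁻ t in Icc 0 L, ρ (c t) ∂volume :=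
  stmt6_general μ Q C hgrowth A hdim
end

section
/- Let (X,d) be a metric space and μ a Borel measure on X. Let 1 < p ≤ Q < ∞ and suppose μ(B(x,r)) ≤ C·r^Q for all x ∈ X and r > 0 (closed balls), where C > 0 is fixed. Let A ⊆ X be a compact set with H^{Q-p}(A) < ∞ and fix R > 0. Then there exists a constant C'' > 0, depending only on C, Q, p, and H^{Q-p}(A), such that for every r ∈ (0,R) there exists a Borel function ρ : X → [0,∞] with ∫_X ρ^p dμ ≤ C'' and with the property that ∫_0^L ρ(c(t)) dt ≥ 1 for every L > 0 and every curve c : [0,L] → X parametrized by arc length whose image meets A and also meets X \ N(A,R), where N(A,R) = {x : dist(x,A) ≤ R}. -/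
open MeasureTheory Set Metric
open scoped ENNReal

/-! Cover `A` by balls `B(x_j, r_j)` with `2 r_j ≤ r` and `∑ r_j^{Q-p}` bounded by
`H^{Q-p}(A) + 1` plus a constant depending on `Q - p`, and put `ρ = sup_j r_j⁻¹ 1_{B(x_j, 2 r_j)}`.
Then `∫ ρ^p ≤ ∑_j r_j^{-p} μ(B(x_j, 2 r_j)) ≤ C 2^Q ∑_j r_j^{Q-p}`. A unit-speed curve through a
point of `A ∩ B(x_j, r_j)` that leaves `N(A, R)` travels farther than `r_j`, so it spends time `r_j` in
`B(x_j, 2 r_j)`, where `ρ ≥ r_j⁻¹`. -/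

namespace ENNReal

theorem rpow_le_rpow_of_nonpos {x y : ℝ≥0∞} {z : ℝ} (hxy : x ≤ y) (hz : z ≤ 0) :
    y ^ z ≤ x ^ z := by
  have h := rpow_le_rpow hxy (neg_nonneg.2 hz)
  rw [rpow_neg, rpow_neg] at h
  exact ENNReal.inv_le_inv.1 h

theorem iSup_rpow_le_tsum_rpow {ι : Type*} (f : ι → ℝ≥0∞) {p : ℝ} (hp : 0 < p) :
    (⨆ j, f j) ^ p ≤ ∑' j, f j ^ p := by
  rw [← orderIsoRpow_apply p hp, OrderIso.map_iSup]
  exact iSup_le fun j => ENNReal.le_tsum j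

theorem max_rpow_le_add_rpow (a b : ℝ≥0∞) {s : ℝ} (hs : 0 ≤ s) :
    max a b ^ s ≤ a ^ s + b ^ s := by
  rw [(monotone_rpow_of_nonneg hs).map_max]
  exact max_le le_self_add le_add_self

end ENNReal

/-- `∑ₙ (2^{-s})ⁿ` for `s > 0`: what padding the `n`-th radius of a cover by `2⁻ⁿ` may add to
`∑ rₙ^s`. For `s ≤ 0` padding adds nothing. -/
noncomputable def halfRpowGeomSum (s : ℝ) : ℝ≥0∞ :=
  if 0 < s then (1 - 2⁻¹ ^ s)⁻¹ else 0

theorem halfRpowGeomSum_ne_top (s : ℝ) : halfRpowGeomSum s ≠ ⊤ := by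
  unfold halfRpowGeomSum
  split_ifs with hs
  · exact ENNReal.inv_ne_top.2 (tsub_pos_of_lt (ENNReal.rpow_lt_one (by norm_num) hs)).ne'
  · exact ENNReal.zero_ne_top

theorem exists_cover_tsum_ediam_rpow_lt {X : Type*} [EMetricSpace X] [MeasurableSpace X]
    [BorelSpace X] {s : ℝ} {A : Set X} {K : ℝ≥0∞} (hK : μH[s] A < K) {δ : ℝ≥0∞} (hδ : 0 < δ) :
    ∃ t : ℕ → Set X, A ⊆ ⋃ n, t n ∧ (∀ n, ediam (t n) ≤ δ) ∧
      ∑' n, ⨆ _ : (t n).Nonempty, ediam (t n) ^ s < K := by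
  rw [Measure.hausdorffMeasure_apply] at hK
  simpa only [iInf_lt_iff, exists_prop] using (le_iSup₂ (f := fun (δ : ℝ≥0∞) (_ : 0 < δ) =>
    ⨅ (t : ℕ → Set X) (_ : A ⊆ ⋃ n, t n) (_ : ∀ n, ediam (t n) ≤ δ),
      ∑' n, ⨆ _ : (t n).Nonempty, ediam (t n) ^ s) δ hδ).trans_lt hK

theorem exists_closedBall_cover_tsum_rpow_le {X : Type*} [MetricSpace X] [MeasurableSpace X]
    [BorelSpace X] {s : ℝ} {A : Set X} {K : ℝ≥0∞} (hK : μH[s] A < K) {δ : ℝ} (hδ : 0 < δ) :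
    ∃ (ι : Type) (_ : Countable ι) (x : ι → X) (r : ι → ℝ), (∀ j, 0 < r j ∧ r j ≤ δ) ∧
      A ⊆ ⋃ j, closedBall (x j) (r j) ∧ ∑' j, ENNReal.ofReal (r j) ^ s ≤ K + halfRpowGeomSum s := by
  obtain ⟨t, hAt, htδ, htK⟩ := exists_cover_tsum_ediam_rpow_lt hK (ENNReal.ofReal_pos.2 hδ)
  have ht_ne_top n : ediam (t n) ≠ ⊤ := ((htδ n).trans_lt ENNReal.ofReal_lt_top).ne
  set ε : ℕ → ℝ := fun n => min δ ((1 / 2) ^ n)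
  set r : {n // (t n).Nonempty} → ℝ := fun j => max (diam (t j)) (ε j)
  have hr_eq j : ENNReal.ofReal (r j) = max (ediam (t j)) (ENNReal.ofReal (ε j)) := by
    rw [ENNReal.ofReal_max, diam, ENNReal.ofReal_toReal (ht_ne_top j)]
  refine ⟨{n // (t n).Nonempty}, inferInstance, fun j => j.2.some, r, fun j => ⟨?_, ?_⟩, ?_, ?_⟩
  · exact lt_max_of_lt_right (lt_min hδ (by positivity))
  · exact max_le (ENNReal.toReal_le_of_le_ofReal hδ.le (htδ j)) (min_le_left _ _)
  · intro a ha
    obtain ⟨n, han⟩ := mem_iUnion.1 (hAt ha)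
    refine mem_iUnion.2 ⟨⟨n, a, han⟩, mem_closedBall.2 (le_max_of_le_left ?_)⟩
    exact dist_le_diam_of_mem (isBounded_iff_ediam_ne_top.2 (ht_ne_top n)) han
      (Set.Nonempty.some_mem _)
  have hdiam_pow (j : {n // (t n).Nonempty}) :
      ediam (t j) ^ s = ⨆ _ : (t j).Nonempty, ediam (t j) ^ s :=
    (iSup_pos (f := fun _ => ediam (t j) ^ s) j.2).symm
  rcases le_or_gt s 0 with hs | hs
  · calc ∑' j, ENNReal.ofReal (r j) ^ s ≤ ∑' j : {n // (t n).Nonempty}, ediam (t j) ^ s :=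
          ENNReal.tsum_le_tsum fun j =>
            ENNReal.rpow_le_rpow_of_nonpos ((hr_eq j).symm ▸ le_max_left _ _) hs
      _ ≤ K := (tsum_congr hdiam_pow).trans_le <|
          (ENNReal.tsum_comp_le_tsum_of_injective Subtype.val_injective _).trans htK.le
      _ ≤ K + halfRpowGeomSum s := le_self_add
  · set y : ℝ≥0∞ := 2⁻¹ ^ s
    have hε_pow n : ENNReal.ofReal (ε n) ^ s ≤ y ^ n := by
      have : ENNReal.ofReal (ε n) ≤ 2⁻¹ ^ n := by
        refine (ENNReal.ofReal_le_ofReal (min_le_right _ _)).trans_eq ?_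
        rw [ENNReal.ofReal_pow (by norm_num), one_div, ENNReal.ofReal_inv_of_pos two_pos,
          ENNReal.ofReal_ofNat]
      refine (ENNReal.rpow_le_rpow this hs.le).trans_eq ?_
      rw [← ENNReal.rpow_natCast, ← ENNReal.rpow_mul, mul_comm, ENNReal.rpow_mul,
        ENNReal.rpow_natCast]
    calc ∑' j, ENNReal.ofReal (r j) ^ s
        ≤ ∑' j : {n // (t n).Nonempty},
            ((⨆ _ : (t j).Nonempty, ediam (t j) ^ s) + y ^ (j : ℕ)) := by
          refine ENNReal.tsum_le_tsum fun j => ?_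
          rw [hr_eq, ← hdiam_pow]
          exact (ENNReal.max_rpow_le_add_rpow _ _ hs.le).trans (by gcongr; exact hε_pow j)
      _ ≤ ∑' n, ((⨆ _ : (t n).Nonempty, ediam (t n) ^ s) + y ^ n) :=
          ENNReal.tsum_comp_le_tsum_of_injective Subtype.val_injective
            (fun n => (⨆ _ : (t n).Nonempty, ediam (t n) ^ s) + y ^ n)
      _ ≤ K + halfRpowGeomSum s := by
          rw [ENNReal.tsum_add, ENNReal.tsum_geometric, halfRpowGeomSum, if_pos hs]
          gcongr

section CoverDensity

variable {X : Type*} [PseudoMetricSpace X]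

/-- The paper's `ρ = sup_j r_j⁻¹ · 1_{B(x_j, 2 r_j)}` attached to a cover of `A` by balls
`B(x_j, r_j)`. -/
noncomputable def coverDensity {ι : Type*} (x : ι → X) (r : ι → ℝ) (z : X) : ℝ≥0∞ :=
  ⨆ j, (closedBall (x j) (2 * r j)).indicator (fun _ => (ENNReal.ofReal (r j))⁻¹) z

theorem indicator_le_coverDensity {ι : Type*} (x : ι → X) (r : ι → ℝ) (j : ι) (z : X) :
    (closedBall (x j) (2 * r j)).indicator (fun _ => (ENNReal.ofReal (r j))⁻¹) z ≤
      coverDensity x r z :=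
  le_iSup (fun j => (closedBall (x j) (2 * r j)).indicator
    (fun _ => (ENNReal.ofReal (r j))⁻¹) z) j

theorem measurable_coverDensity [MeasurableSpace X] [OpensMeasurableSpace X] {ι : Type*}
    [Countable ι] (x : ι → X) (r : ι → ℝ) : Measurable (coverDensity x r) :=
  .iSup fun _ => measurable_const.indicator measurableSet_closedBall

theorem lintegral_indicator_closedBall_rpow_le [MeasurableSpace X] [OpensMeasurableSpace X]
    (μ : Measure X) {p Q C : ℝ} (hp : 0 < p)
    (hμ : ∀ (x : X) (r : ℝ), 0 < r → μ (closedBall x r) ≤ ENNReal.ofReal (C * r ^ Q))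
    (y : X) {ρ : ℝ} (hρ : 0 < ρ) :
    ∫⁻ z, (closedBall y (2 * ρ)).indicator (fun _ => (ENNReal.ofReal ρ)⁻¹) z ^ p ∂μ ≤
      ENNReal.ofReal C * 2 ^ Q * ENNReal.ofReal ρ ^ (Q - p) := by
  have hρ0 : ENNReal.ofReal ρ ≠ 0 := (ENNReal.ofReal_pos.2 hρ).ne'
  have hpow : (fun z => (closedBall y (2 * ρ)).indicator (fun _ => (ENNReal.ofReal ρ)⁻¹) z ^ p) =
      (closedBall y (2 * ρ)).indicator (fun _ => (ENNReal.ofReal ρ)⁻¹ ^ p) :=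
    (indicator_comp_of_zero (g := fun a : ℝ≥0∞ => a ^ p) (ENNReal.zero_rpow_of_pos hp)).symm
  calc ∫⁻ z, (closedBall y (2 * ρ)).indicator (fun _ => (ENNReal.ofReal ρ)⁻¹) z ^ p ∂μ
      = (ENNReal.ofReal ρ)⁻¹ ^ p * μ (closedBall y (2 * ρ)) := by
        rw [hpow, lintegral_indicator_const measurableSet_closedBall]
    _ ≤ (ENNReal.ofReal ρ)⁻¹ ^ p * ENNReal.ofReal (C * (2 * ρ) ^ Q) := by
        gcongr; exact hμ _ _ (by positivity)
    _ = ENNReal.ofReal C * 2 ^ Q * ENNReal.ofReal ρ ^ (Q - p) := by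
        rw [ENNReal.ofReal_mul' (by positivity), ← ENNReal.ofReal_rpow_of_pos (by positivity),
          ENNReal.ofReal_mul zero_le_two, ENNReal.ofReal_ofNat,
          ENNReal.mul_rpow_of_ne_zero two_ne_zero hρ0, ENNReal.inv_rpow,
          ENNReal.rpow_sub _ _ hρ0 ENNReal.ofReal_ne_top, div_eq_mul_inv]
        ring

theorem lintegral_coverDensity_rpow_le [MeasurableSpace X] [OpensMeasurableSpace X]
    (μ : Measure X) {p Q C : ℝ} (hp : 0 < p)
    (hμ : ∀ (x : X) (r : ℝ), 0 < r → μ (closedBall x r) ≤ ENNReal.ofReal (C * r ^ Q))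
    {ι : Type*} [Countable ι] (x : ι → X) {r : ι → ℝ} (hr : ∀ j, 0 < r j) :
    ∫⁻ z, coverDensity x r z ^ p ∂μ ≤
      ENNReal.ofReal C * 2 ^ Q * ∑' j, ENNReal.ofReal (r j) ^ (Q - p) :=
  calc ∫⁻ z, coverDensity x r z ^ p ∂μ
      ≤ ∫⁻ z, ∑' j, (closedBall (x j) (2 * r j)).indicator
          (fun _ => (ENNReal.ofReal (r j))⁻¹) z ^ p ∂μ :=
        lintegral_mono fun _ => ENNReal.iSup_rpow_le_tsum_rpow _ hp
    _ = ∑' j, ∫⁻ z, (closedBall (x j) (2 * r j)).indicator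
          (fun _ => (ENNReal.ofReal (r j))⁻¹) z ^ p ∂μ :=
        lintegral_tsum fun _ =>
          ((measurable_const.indicator measurableSet_closedBall).pow_const _).aemeasurable
    _ ≤ ∑' j, ENNReal.ofReal C * 2 ^ Q * ENNReal.ofReal (r j) ^ (Q - p) :=
        ENNReal.tsum_le_tsum fun j => lintegral_indicator_closedBall_rpow_le μ hp hμ _ (hr j)
    _ = ENNReal.ofReal C * 2 ^ Q * ∑' j, ENNReal.ofReal (r j) ^ (Q - p) := ENNReal.tsum_mul_left

end CoverDensity

theorem exists_Icc_subset_Icc_of_le_abs_sub {L r a b : ℝ} (ha : a ∈ Icc 0 L) (hb : b ∈ Icc 0 L)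
    (hr : 0 ≤ r) (hab : r ≤ |a - b|) :
    ∃ u, Icc u (u + r) ⊆ Icc 0 L ∧ a ∈ Icc u (u + r) := by
  rcases le_total a b with h | h
  · rw [abs_of_nonpos (sub_nonpos.2 h)] at hab
    exact ⟨a, Icc_subset_Icc ha.1 (by linarith [hb.2]), le_rfl, by linarith⟩
  · rw [abs_of_nonneg (sub_nonneg.2 h)] at hab
    exact ⟨a - r, Icc_subset_Icc (by linarith [hb.1]) (by linarith [ha.2]), by linarith,
      by linarith⟩

theorem mapsTo_closedBall_of_lipschitzOnWith_one {X : Type*} [PseudoMetricSpace X] {c : ℝ → X}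
    {S : Set ℝ} (hc : LipschitzOnWith 1 c S) {u r t₀ : ℝ} (hS : Icc u (u + r) ⊆ S)
    (ht₀ : t₀ ∈ Icc u (u + r)) {y : X} {ρ : ℝ} (hy : c t₀ ∈ closedBall y ρ) :
    MapsTo c (Icc u (u + r)) (closedBall y (r + ρ)) := by
  intro t ht
  have hdist : dist (c t) (c t₀) ≤ r := by
    refine (hc.dist_le_mul t (hS ht) t₀ (hS ht₀)).trans ?_
    rw [NNReal.coe_one, one_mul, Real.dist_eq, abs_le]
    constructor <;> linarith [ht.1, ht.2, ht₀.1, ht₀.2]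
  exact (dist_triangle _ _ _).trans (add_le_add hdist hy)

/-- A 1-Lipschitz path through `B(y, ρ)` that travels farther than `ρ` spends time at least `ρ`
in `B(y, 2ρ)`. -/
theorem one_le_setLIntegral_indicator_closedBall_comp {X : Type*} [PseudoMetricSpace X]
    {c : ℝ → X} {L : ℝ} (hc : LipschitzOnWith 1 c (Icc 0 L)) {a b : ℝ} (ha : a ∈ Icc 0 L)
    (hb : b ∈ Icc 0 L) {y : X} {ρ : ℝ} (hρ : 0 < ρ) (hya : c a ∈ closedBall y ρ)
    (hfar : ρ ≤ dist (c a) (c b)) :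
    1 ≤ ∫⁻ t in Icc 0 L,
      (closedBall y (2 * ρ)).indicator (fun _ => (ENNReal.ofReal ρ)⁻¹) (c t) := by
  have hab : ρ ≤ |a - b| := by
    have := hc.dist_le_mul a ha b hb
    rw [NNReal.coe_one, one_mul, Real.dist_eq] at this
    linarith
  obtain ⟨u, hu, hau⟩ := exists_Icc_subset_Icc_of_le_abs_sub ha hb hρ.le hab
  have hmaps := mapsTo_closedBall_of_lipschitzOnWith_one hc hu hau hya
  rw [← two_mul] at hmaps
  calc (1 : ℝ≥0∞) = (ENNReal.ofReal ρ)⁻¹ * volume (Icc u (u + ρ)) := by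
        rw [Real.volume_Icc, add_sub_cancel_left,
          ENNReal.inv_mul_cancel (ENNReal.ofReal_pos.2 hρ).ne' ENNReal.ofReal_ne_top]
    _ = ∫⁻ t in Icc 0 L, (Icc u (u + ρ)).indicator (fun _ => (ENNReal.ofReal ρ)⁻¹) t := by
        rw [lintegral_indicator_const measurableSet_Icc, Measure.restrict_apply measurableSet_Icc,
          inter_eq_self_of_subset_left hu]
    _ ≤ _ := lintegral_mono fun t => by
        by_cases ht : t ∈ Icc u (u + ρ)
        · rw [indicator_of_mem ht, indicator_of_mem (hmaps ht)]
        · rw [indicator_of_notMem ht]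
          exact zero_le

noncomputable def curveModulusBound (C Q p h : ℝ) : ℝ :=
  (ENNReal.ofReal C * 2 ^ Q * (ENNReal.ofReal h + 1 + halfRpowGeomSum (Q - p))).toReal + 1

theorem curveModulusBound_pos (C Q p h : ℝ) : 0 < curveModulusBound C Q p h :=
  add_pos_of_nonneg_of_pos ENNReal.toReal_nonneg one_pos

theorem le_ofReal_curveModulusBound (C Q p : ℝ) {H : ℝ≥0∞} (hH : H ≠ ⊤) :
    ENNReal.ofReal C * 2 ^ Q * (H + 1 + halfRpowGeomSum (Q - p)) ≤
      ENNReal.ofReal (curveModulusBound C Q p H.toReal) := by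
  have hfin : ENNReal.ofReal C * 2 ^ Q * (H + 1 + halfRpowGeomSum (Q - p)) ≠ ⊤ := by
    have := halfRpowGeomSum_ne_top (Q - p)
    have := ENNReal.rpow_ne_top_of_ne_zero (y := Q) two_ne_zero ENNReal.ofNat_ne_top
    finiteness
  rw [curveModulusBound, ENNReal.ofReal_toReal hH]
  exact (ENNReal.le_ofReal_iff_toReal_le hfin (by positivity)).2
    (le_add_of_nonneg_right zero_le_one)

/-- There is a constant `C'' > 0` depending only on `C`, `Q`, `p` and
`H^{Q-p}(A)` (formalized as a positive function `F` of these four quantities) such that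
whenever `(X,d)` is a metric space, `μ` a Borel measure with `μ(B(x,r)) ≤ C·r^Q`
(closed balls), `1 < p ≤ Q`, `A ⊆ X` compact with `H^{Q-p}(A) < ∞`, and `R > 0`,
then for every `r ∈ (0,R)` there is a Borel `ρ : X → [0,∞]` with `∫ ρ^p dμ ≤ C''`
such that `∫_0^L ρ(c(t)) dt ≥ 1` for every arc-length parametrized curve
`c : [0,L] → X` whose image meets `A` and meets `X \ N(A,R)`. -/
theorem stmt7 :
    ∃ F : ℝ → ℝ → ℝ → ℝ → ℝ, (∀ C Q p h, 0 < F C Q p h) ∧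
      ∀ (X : Type) [MetricSpace X] [MeasurableSpace X] [BorelSpace X]
        (μ : Measure X) (p Q C : ℝ), 1 < p → p ≤ Q → 0 < C →
        (∀ (x : X) (r : ℝ), 0 < r →
          μ (closedBall x r) ≤ ENNReal.ofReal (C * r ^ Q)) →
        ∀ A : Set X, IsCompact A → μH[Q - p] A < ⊤ →
        ∀ R : ℝ, 0 < R → ∀ r : ℝ, 0 < r → r < R →
        ∃ ρ : X → ℝ≥0∞, Measurable ρ ∧
          (∫⁻ x, ρ x ^ p ∂μ) ≤ ENNReal.ofReal (F C Q p (μH[Q - p] A).toReal) ∧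
          ∀ L : ℝ, 0 < L → ∀ c : ℝ → X, IsArcLengthParam L c →
            (∃ t ∈ Icc 0 L, c t ∈ A) →
            (∃ t ∈ Icc 0 L, c t ∉ cthickening R A) →
            1 ≤ ∫⁻ t in Icc 0 L, ρ (c t) ∂volume := by
  refine ⟨curveModulusBound, curveModulusBound_pos, ?_⟩
  intro X _ _ _ μ p Q C hp _ _ hμ A _ hA R _ r hr hrR
  obtain ⟨ι, _, x, rad, hrad, hAcov, hsum⟩ := exists_closedBall_cover_tsum_rpow_le
    (ENNReal.lt_add_right hA.ne one_ne_zero) (half_pos hr)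
  refine ⟨coverDensity x rad, measurable_coverDensity x rad, ?_, ?_⟩
  · calc ∫⁻ z, coverDensity x rad z ^ p ∂μ
        ≤ ENNReal.ofReal C * 2 ^ Q * ∑' j, ENNReal.ofReal (rad j) ^ (Q - p) :=
          lintegral_coverDensity_rpow_le μ (by linarith) hμ x fun j => (hrad j).1
      _ ≤ ENNReal.ofReal C * 2 ^ Q * (μH[Q - p] A + 1 + halfRpowGeomSum (Q - p)) := by gcongr
      _ ≤ _ := le_ofReal_curveModulusBound C Q p hA.ne
  · rintro L - c hc ⟨a, ha, haA⟩ ⟨b, hb, hbA⟩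
    obtain ⟨j, hj⟩ := mem_iUnion.1 (hAcov haA)
    have hfar : rad j ≤ dist (c a) (c b) := by
      have : R < dist (c b) (c a) :=
        not_le.1 fun h => hbA (mem_cthickening_of_dist_le _ _ _ _ haA h)
      linarith [(hrad j).2, dist_comm (c a) (c b)]
    exact (one_le_setLIntegral_indicator_closedBall_comp hc.1 ha hb (hrad j).1 hj hfar).trans
      (lintegral_mono fun t => indicator_le_coverDensity x rad j (c t))
end

section
/- Let n ≥ 1 and p > n. There exists a constant C > 0, depending only on n and p, such that the following holds. Let u : ℝ^n → ℝ be any function and let g : ℝ^n → [0,∞] be a Borel function with ∫_{ℝ^n} g^p dx < ∞ which is an upper gradient of u, that is, |u(c(L)) − u(c(0))| ≤ ∫_0^L g(c(t)) dt for every L > 0 and every curve c : [0,L] → ℝ^n parametrized by arc length. Then for all x, y ∈ ℝ^n with |x − y| ≤ 1 one has |u(x) − u(y)| ≤ C·|x − y|^{1 − n/p}·‖g‖_{L^p(B(x, C|x−y|))}. -/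
open MeasureTheory Set Metric
open scoped ENNReal

/-- `g` is an upper gradient of `u`: for every curve `c : [0,L] → X` parametrized by
arc length, `|u(c(L)) - u(c(0))| ≤ ∫_0^L g(c(t)) dt`. -/
def IsUpperGradient {X : Type*} [PseudoMetricSpace X] (u : X → ℝ) (g : X → ℝ≥0∞) :
    Prop :=
  ∀ L : ℝ, 0 < L → ∀ c : ℝ → X, IsArcLengthParam L c →
    ENNReal.ofReal |u (c L) - u (c 0)| ≤ ∫⁻ t in Icc 0 L, g (c t) ∂volume


/-!
For `z` in the ball `B = B(x, |x - y|)`, the upper-gradient inequality along the segments from `x`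
and from `y` to `z` bounds `|u x - u y|` by `2|x - y|` times the averages of `g` over the two
segments. Averaging in `z ∈ B` and swapping the integrals, the segment average from `w ∈ {x, y}`
becomes `∫₀¹ ∫_B g(w + s(z - w)) dz ds`. The homothety `z ↦ w + s(z - w)` maps `B` into itself
and scales volume by `sⁿ`, so Hölder's inequality bounds the inner integral by
`s^(-n/p) ‖g‖_{L^p(B)} |B|^(1 - 1/p)`, which is integrable in `s` exactly because `p > n`.
-/

open Module AffineMap

theorem lintegral_le_Lp_mul_measure_univ_rpow {α : Type*} [MeasurableSpace α] (μ : Measure α)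
    {p : ℝ} (hp : 1 < p) {f : α → ℝ≥0∞} (hf : AEMeasurable f μ) :
    ∫⁻ a, f a ∂μ ≤ (∫⁻ a, f a ^ p ∂μ) ^ (1 / p) * μ univ ^ (1 - 1 / p) := by
  have hpq := Real.HolderConjugate.conjExponent hp
  have h := ENNReal.lintegral_mul_le_Lp_mul_Lq μ hpq hf (aemeasurable_const (b := 1))
  simpa [hpq.one_sub_inv] using h

theorem lintegral_Ioc_rpow_neg {a : ℝ} (ha : a < 1) :
    ∫⁻ s in Ioc (0 : ℝ) 1, ENNReal.ofReal (s ^ (-a)) = ENNReal.ofReal (1 - a)⁻¹ := by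
  have hint : IntegrableOn (fun s : ℝ => s ^ (-a)) (Ioc 0 1) := by
    rw [integrableOn_Ioc_iff_integrableOn_Ioo]
    exact (intervalIntegral.integrableOn_Ioo_rpow_iff one_pos).2 (by linarith)
  rw [← ofReal_integral_eq_lintegral_ofReal hint
      ((ae_restrict_iff' measurableSet_Ioc).2 (ae_of_all _ fun s hs => Real.rpow_nonneg hs.1.le _)),
    ← intervalIntegral.integral_of_le zero_le_one, integral_rpow (Or.inl (by linarith))]
  congr 1
  rw [Real.zero_rpow (by linarith), Real.one_rpow]
  ring

section Homothety

variable {E : Type*} [NormedAddCommGroup E] [NormedSpace ℝ E] [MeasurableSpace E] [BorelSpace E]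
  [FiniteDimensional ℝ E] (μ : Measure E) [μ.IsAddHaarMeasure] {g : E → ℝ≥0∞}

theorem map_homothety_addHaar (c : E) {r : ℝ} (hr : r ≠ 0) :
    Measure.map (homothety c r) μ = ENNReal.ofReal |r ^ finrank ℝ E|⁻¹ • μ := by
  ext s hs
  rw [Measure.map_apply (homothety_continuous c r).measurable hs, Measure.smul_apply,
    smul_eq_mul]
  change μ (AffineEquiv.homothetyUnitsMulHom c (Units.mk0 r hr) ⁻¹' s) = _
  rw [← AffineEquiv.image_symm, AffineEquiv.coe_homothetyUnitsMulHom_apply_symm,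
    Measure.addHaar_image_homothety, Units.val_inv_eq_inv_val, Units.val_mk0, inv_pow, abs_inv]

theorem setLIntegral_comp_homothety (c : E) {r : ℝ} (hr : r ≠ 0) {f : E → ℝ≥0∞}
    (hf : Measurable f) {s : Set E} (hs : MeasurableSet s) :
    ∫⁻ z in homothety c r ⁻¹' s, f (homothety c r z) ∂μ =
      ENNReal.ofReal |r ^ finrank ℝ E|⁻¹ * ∫⁻ z in s, f z ∂μ := by
  rw [← setLIntegral_map hs hf (homothety_continuous c r).measurable,
    map_homothety_addHaar μ c hr, Measure.restrict_smul, lintegral_smul_measure, smul_eq_mul]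

theorem setLIntegral_comp_homothety_le {w : E} {B : Set E} (hB : StarConvex ℝ w B)
    (hBm : MeasurableSet B) {s : ℝ} (hs : s ∈ Ioc 0 1) {f : E → ℝ≥0∞} (hf : Measurable f) :
    ∫⁻ z in B, f (homothety w s z) ∂μ ≤
      ENNReal.ofReal (s ^ finrank ℝ E)⁻¹ * ∫⁻ z in B, f z ∂μ := by
  have hsub : B ⊆ homothety w s ⁻¹' B := fun z hz =>
    hB.segment_subset hz (homothety_eq_lineMap w s z ▸ lineMap_mem_segment ℝ w z ⟨hs.1.le, hs.2⟩)
  calc ∫⁻ z in B, f (homothety w s z) ∂μ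
      ≤ ∫⁻ z in homothety w s ⁻¹' B, f (homothety w s z) ∂μ := lintegral_mono_set hsub
    _ = _ := by
        rw [setLIntegral_comp_homothety μ w hs.1.ne' hf hBm, abs_of_pos (pow_pos hs.1 _)]

theorem setLIntegral_comp_homothety_le_rpow {p : ℝ} (hp : 1 < p) (hg : Measurable g) {w : E}
    {B : Set E} (hB : StarConvex ℝ w B) (hBm : MeasurableSet B) {s : ℝ} (hs : s ∈ Ioc 0 1) :
    ∫⁻ z in B, g (homothety w s z) ∂μ ≤
      ENNReal.ofReal (s ^ (-(finrank ℝ E / p))) * (∫⁻ z in B, g z ^ p ∂μ) ^ (1 / p) *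
        μ B ^ (1 - 1 / p) := by
  have hp0 : 0 < 1 / p := by positivity
  have hscale : ENNReal.ofReal (s ^ finrank ℝ E)⁻¹ ^ (1 / p) =
      ENNReal.ofReal (s ^ (-(finrank ℝ E / p))) := by
    rw [ENNReal.ofReal_rpow_of_nonneg (inv_nonneg.2 (pow_nonneg hs.1.le _)) hp0.le,
      ← Real.rpow_natCast, ← Real.rpow_neg hs.1.le, ← Real.rpow_mul hs.1.le]
    ring_nf
  calc ∫⁻ z in B, g (homothety w s z) ∂μ
      ≤ (∫⁻ z in B, g (homothety w s z) ^ p ∂μ) ^ (1 / p) * μ B ^ (1 - 1 / p) := by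
        simpa using lintegral_le_Lp_mul_measure_univ_rpow (μ.restrict B) hp
          (hg.comp (homothety_continuous w s).measurable).aemeasurable
    _ ≤ (ENNReal.ofReal (s ^ finrank ℝ E)⁻¹ * ∫⁻ z in B, g z ^ p ∂μ) ^ (1 / p) *
          μ B ^ (1 - 1 / p) := by
        gcongr
        exact setLIntegral_comp_homothety_le μ hB hBm hs (hg.pow_const p)
    _ = _ := by rw [ENNReal.mul_rpow_of_nonneg _ _ hp0.le, hscale]

end Homothety

theorem setLIntegral_Icc_zero_eq_mul {f : ℝ → ℝ≥0∞} (hf : Measurable f) {L : ℝ} (hL : 0 < L) :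
    ∫⁻ t in Icc 0 L, f t = ENNReal.ofReal L * ∫⁻ s in Icc (0 : ℝ) 1, f (L * s) := by
  have hpre : homothety (0 : ℝ) L ⁻¹' Icc 0 L = Icc 0 1 := by
    ext s
    simp [homothety_apply, mul_nonneg_iff_of_pos_left hL, mul_le_iff_le_one_right hL]
  have h := setLIntegral_comp_homothety volume (0 : ℝ) hL.ne' hf
    (measurableSet_Icc (a := 0) (b := L))
  simp only [hpre, homothety_apply, vsub_eq_sub, vadd_eq_add, sub_zero, add_zero, smul_eq_mul,
    finrank_self, pow_one, abs_of_pos hL] at h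
  rw [h, ← mul_assoc, ← ENNReal.ofReal_mul hL.le, mul_inv_cancel₀ hL.ne', ENNReal.ofReal_one,
    one_mul]

theorem Isometry.isArcLengthParam {X : Type*} [PseudoMetricSpace X] {c : ℝ → X}
    (hc : Isometry c) (L : ℝ) : IsArcLengthParam L c := by
  refine ⟨hc.lipschitz.lipschitzOnWith, fun s t _ hst _ => le_antisymm ?_ ?_⟩
  · simpa using hc.lipschitz.lipschitzOnWith.comp_eVariationOn_le (g := id) (mapsTo_id (Icc s t))
  · have h := eVariationOn.edist_le c (left_mem_Icc.2 hst) (right_mem_Icc.2 hst)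
    rwa [hc.edist_eq, edist_dist, Real.dist_eq, abs_sub_comm, abs_of_nonneg (sub_nonneg.2 hst)] at h

section Segment

variable {E : Type*} [NormedAddCommGroup E] [NormedSpace ℝ E]

noncomputable def segmentLIntegral (g : E → ℝ≥0∞) (a b : E) : ℝ≥0∞ :=
  ∫⁻ s in Icc (0 : ℝ) 1, g (homothety a s b)

theorem isometry_homothety_div_dist {a b : E} (hab : a ≠ b) :
    Isometry fun t : ℝ => homothety a (t / dist a b) b := by
  have hL : 0 < dist a b := dist_pos.2 hab
  refine Isometry.of_dist_eq fun s t => ?_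
  rw [dist_eq_norm, Real.dist_eq]
  simp only [homothety_apply, vsub_eq_sub, vadd_eq_add, add_sub_add_right_eq_sub, ← sub_smul,
    norm_smul, Real.norm_eq_abs, ← sub_div, abs_div, abs_of_pos hL, ← dist_eq_norm']
  exact div_mul_cancel₀ _ hL.ne'

variable [MeasurableSpace E] [BorelSpace E] {u : E → ℝ} {g : E → ℝ≥0∞}

theorem IsUpperGradient.ofReal_abs_sub_le_dist_mul (hu : IsUpperGradient u g)
    (hg : Measurable g) (a b : E) :
    ENNReal.ofReal |u b - u a| ≤ ENNReal.ofReal (dist a b) * segmentLIntegral g a b := by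
  rcases eq_or_ne a b with rfl | hab
  · simp
  have hL : 0 < dist a b := dist_pos.2 hab
  set c : ℝ → E := fun t => homothety a (t / dist a b) b
  have hc : Measurable fun t => g (c t) :=
    hg.comp (by simp only [c, homothety_eq_lineMap]; fun_prop)
  have h := hu _ hL c ((isometry_homothety_div_dist hab).isArcLengthParam _)
  rw [setLIntegral_Icc_zero_eq_mul hc hL] at h
  simpa [c, hL.ne', segmentLIntegral] using h

theorem measurable_segmentLIntegral (hg : Measurable g) (w : E) :
    Measurable (segmentLIntegral g w) := by
  refine Measurable.lintegral_prod_right' (f := fun zs : E × ℝ => g (homothety w zs.2 zs.1)) ?_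
  exact hg.comp (by simp only [homothety_eq_lineMap]; fun_prop)

theorem IsUpperGradient.ofReal_abs_sub_le_of_dist_le (hu : IsUpperGradient u g)
    (hg : Measurable g) {x y z : E} {r : ℝ} (hx : dist x z ≤ r) (hy : dist y z ≤ r) :
    ENNReal.ofReal |u x - u y| ≤
      ENNReal.ofReal r * (segmentLIntegral g x z + segmentLIntegral g y z) := by
  calc ENNReal.ofReal |u x - u y|
      ≤ ENNReal.ofReal |u z - u x| + ENNReal.ofReal |u z - u y| := by
        rw [← ENNReal.ofReal_add (abs_nonneg _) (abs_nonneg _), abs_sub_comm (u z)]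
        exact ENNReal.ofReal_le_ofReal (abs_sub_le _ _ _)
    _ ≤ ENNReal.ofReal (dist x z) * segmentLIntegral g x z +
          ENNReal.ofReal (dist y z) * segmentLIntegral g y z :=
        add_le_add (hu.ofReal_abs_sub_le_dist_mul hg x z) (hu.ofReal_abs_sub_le_dist_mul hg y z)
    _ ≤ _ := by
        rw [mul_add]
        gcongr

end Segment

section Morrey

variable {E : Type*} [NormedAddCommGroup E] [NormedSpace ℝ E] [MeasurableSpace E] [BorelSpace E]
  [FiniteDimensional ℝ E] (μ : Measure E) [μ.IsAddHaarMeasure] {u : E → ℝ} {g : E → ℝ≥0∞}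
  {p : ℝ}

theorem setLIntegral_segmentLIntegral_le {p : ℝ} (hp : 1 < p) (hnp : finrank ℝ E < p)
    (hg : Measurable g) {w : E} {B : Set E} (hB : StarConvex ℝ w B) (hBm : MeasurableSet B) :
    ∫⁻ z in B, segmentLIntegral g w z ∂μ ≤
      ENNReal.ofReal (1 - finrank ℝ E / p)⁻¹ * (∫⁻ z in B, g z ^ p ∂μ) ^ (1 / p) *
        μ B ^ (1 - 1 / p) := by
  have hjoint : Measurable fun zs : E × ℝ => g (homothety w zs.2 zs.1) :=
    hg.comp (by simp only [homothety_eq_lineMap]; fun_prop)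
  calc ∫⁻ z in B, segmentLIntegral g w z ∂μ
      = ∫⁻ s in Ioc (0 : ℝ) 1, ∫⁻ z in B, g (homothety w s z) ∂μ := by
        simp only [segmentLIntegral]
        rw [lintegral_lintegral_swap hjoint.aemeasurable, setLIntegral_congr Ioc_ae_eq_Icc]
    _ ≤ ∫⁻ s in Ioc (0 : ℝ) 1, ENNReal.ofReal (s ^ (-(finrank ℝ E / p))) *
          ((∫⁻ z in B, g z ^ p ∂μ) ^ (1 / p) * μ B ^ (1 - 1 / p)) := by
        refine setLIntegral_mono' measurableSet_Ioc fun s hs => ?_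
        rw [← mul_assoc]
        exact setLIntegral_comp_homothety_le_rpow μ hp hg hB hBm hs
    _ = _ := by
        rw [lintegral_mul_const _ (by fun_prop), lintegral_Ioc_rpow_neg, mul_assoc]
        rwa [div_lt_one (by linarith)]

theorem IsUpperGradient.ofReal_abs_sub_mul_measure_le (hu : IsUpperGradient u g)
    (hg : Measurable g) (hp : 1 < p) (hnp : finrank ℝ E < p) (x y : E) :
    ENNReal.ofReal |u x - u y| * μ (closedBall x (dist x y)) ≤
      ENNReal.ofReal (4 * dist x y) * ENNReal.ofReal (1 - finrank ℝ E / p)⁻¹ *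
        (∫⁻ z in closedBall x (dist x y), g z ^ p ∂μ) ^ (1 / p) *
          μ (closedBall x (dist x y)) ^ (1 - 1 / p) := by
  set d := dist x y
  set B := closedBall x d
  set K := ENNReal.ofReal (1 - finrank ℝ E / p)⁻¹ * (∫⁻ z in B, g z ^ p ∂μ) ^ (1 / p) *
    μ B ^ (1 - 1 / p)
  have hconvex : Convex ℝ B := convex_closedBall x d
  have hxB : x ∈ B := mem_closedBall_self dist_nonneg
  have hyB : y ∈ B := by rw [mem_closedBall, dist_comm]
  have hpointwise : ∀ z ∈ B, ENNReal.ofReal |u x - u y| ≤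
      ENNReal.ofReal (2 * d) * (segmentLIntegral g x z + segmentLIntegral g y z) := by
    intro z hz
    rw [mem_closedBall, dist_comm] at hz
    refine hu.ofReal_abs_sub_le_of_dist_le hg (by linarith [dist_nonneg (x := x) (y := y)]) ?_
    linarith [dist_triangle y x z, dist_comm x y]
  calc ENNReal.ofReal |u x - u y| * μ B
      = ∫⁻ _ in B, ENNReal.ofReal |u x - u y| ∂μ := (setLIntegral_const _ _).symm
    _ ≤ ∫⁻ z in B, ENNReal.ofReal (2 * d) *
          (segmentLIntegral g x z + segmentLIntegral g y z) ∂μ :=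
        setLIntegral_mono' measurableSet_closedBall hpointwise
    _ = ENNReal.ofReal (2 * d) * ((∫⁻ z in B, segmentLIntegral g x z ∂μ) +
          ∫⁻ z in B, segmentLIntegral g y z ∂μ) := by
        rw [lintegral_const_mul' _ _ ENNReal.ofReal_ne_top,
          lintegral_add_left (measurable_segmentLIntegral hg x)]
    _ ≤ ENNReal.ofReal (2 * d) * (K + K) := by
        gcongr
        · exact setLIntegral_segmentLIntegral_le μ hp hnp hg (hconvex.starConvex hxB)
            measurableSet_closedBall
        · exact setLIntegral_segmentLIntegral_le μ hp hnp hg (hconvex.starConvex hyB)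
            measurableSet_closedBall
    _ = _ := by
        have h4 : ENNReal.ofReal (4 * d) = ENNReal.ofReal (2 * d) * 2 := by
          rw [← ENNReal.ofReal_ofNat 2, ← ENNReal.ofReal_mul (by positivity)]
          ring_nf
        rw [h4]
        ring

noncomputable def morreyConstant (p : ℝ) : ℝ :=
  4 * (1 - finrank ℝ E / p)⁻¹ * (μ (closedBall 0 1)).toReal ^ (-(1 / p))

theorem IsUpperGradient.ofReal_abs_sub_le (hu : IsUpperGradient u g) (hg : Measurable g)
    (hp : 1 < p) (hnp : finrank ℝ E < p) (x y : E) :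
    ENNReal.ofReal |u x - u y| ≤
      ENNReal.ofReal (morreyConstant μ p * dist x y ^ (1 - finrank ℝ E / p)) *
        (∫⁻ z in closedBall x (dist x y), g z ^ p ∂μ) ^ (1 / p) := by
  rcases eq_or_ne x y with rfl | hxy
  · simp
  have h := hu.ofReal_abs_sub_mul_measure_le μ hg hp hnp x y
  set n := finrank ℝ E
  set d := dist x y
  set v := (μ (closedBall 0 1)).toReal
  have hd : 0 < d := dist_pos.2 hxy
  have hv : 0 < v := ENNReal.toReal_pos (measure_closedBall_pos μ _ one_pos).ne'
    measure_closedBall_lt_top.ne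
  have hk : 0 ≤ (1 - n / p)⁻¹ := inv_nonneg.2 (sub_nonneg.2 ((div_le_one (by linarith)).2 hnp.le))
  have hV : μ (closedBall x d) = ENNReal.ofReal (d ^ n * v) := by
    rw [Measure.addHaar_closedBall' μ x hd.le, ENNReal.ofReal_mul (by positivity),
      ENNReal.ofReal_toReal measure_closedBall_lt_top.ne]
  have hV0 : ENNReal.ofReal (d ^ n * v) ≠ 0 := (ENNReal.ofReal_pos.2 (by positivity)).ne'
  rw [hV, show 1 - 1 / p = -(1 / p) + 1 by ring, ENNReal.rpow_add _ _ hV0 ENNReal.ofReal_ne_top,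
    ENNReal.rpow_one, ← mul_assoc, ENNReal.mul_le_mul_iff_left hV0 ENNReal.ofReal_ne_top,
    ENNReal.ofReal_rpow_of_pos (by positivity)] at h
  have hconst : 4 * d * (1 - n / p)⁻¹ * (d ^ n * v) ^ (-(1 / p)) =
      morreyConstant μ p * d ^ (1 - n / p) := by
    rw [Real.mul_rpow (by positivity) hv.le, ← Real.rpow_natCast, ← Real.rpow_mul hd.le,
      morreyConstant, show 1 - n / p = 1 + n * -(1 / p) by ring, Real.rpow_add hd, Real.rpow_one]
    ring
  rw [← hconst, ENNReal.ofReal_mul (by positivity), ENNReal.ofReal_mul (by positivity)]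
  exact h.trans_eq (by ring)

end Morrey

/-- Morrey–Sobolev inequality via upper gradients on `ℝ^n`.
For `n ≥ 1` and `p > n` there is `C > 0`, depending only on `n` and `p`, such that
whenever `g : ℝ^n → [0,∞]` is a Borel function with `∫ g^p < ∞` which is an upper
gradient of `u : ℝ^n → ℝ`, then for all `x, y` with `|x - y| ≤ 1` one has
`|u(x) - u(y)| ≤ C·|x - y|^{1 - n/p}·‖g‖_{L^p(B(x, C·|x-y|))}`. -/
theorem stmt8 (n : ℕ) (hn : 1 ≤ n) (p : ℝ) (hp : (n : ℝ) < p) :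
    ∃ C : ℝ, 0 < C ∧
      ∀ (u : EuclideanSpace ℝ (Fin n) → ℝ) (g : EuclideanSpace ℝ (Fin n) → ℝ≥0∞),
        Measurable g → (∫⁻ z, g z ^ p) < ⊤ → IsUpperGradient u g →
        ∀ x y : EuclideanSpace ℝ (Fin n), dist x y ≤ 1 →
          ENNReal.ofReal |u x - u y| ≤
            ENNReal.ofReal (C * dist x y ^ (1 - n / p)) *
              (∫⁻ z in closedBall x (C * dist x y), g z ^ p) ^ (1 / p) := by
  have hp1 : 1 < p := lt_of_le_of_lt (by exact_mod_cast hn) hp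
  have hnp : (finrank ℝ (EuclideanSpace ℝ (Fin n)) : ℝ) < p := by
    rwa [finrank_euclideanSpace_fin]
  set C₀ := morreyConstant (volume : Measure (EuclideanSpace ℝ (Fin n))) p
  refine ⟨max 1 C₀, one_pos.trans_le (le_max_left _ _), fun u g hg _ hu x y _ => ?_⟩
  have h := hu.ofReal_abs_sub_le volume hg hp1 hnp x y
  rw [finrank_euclideanSpace_fin] at h
  refine h.trans (mul_le_mul' (ENNReal.ofReal_le_ofReal ?_) ?_)
  · gcongr
    exact le_max_right _ _
  · refine ENNReal.rpow_le_rpow (lintegral_mono_set ?_) (by positivity)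
    exact closedBall_subset_closedBall (le_mul_of_one_le_left dist_nonneg (le_max_left _ _))
end

section
/- Let X be a metric space equipped with a Borel measure μ and let 1 ≤ p < ∞. Let f : X → ℝ be Borel, and let (f_j) be a sequence of Borel functions on X converging to f in L^p(X,μ), i.e. ∫_X |f_j − f|^p dμ → 0. Then there exist a subsequence (f_{j_k}) and a family Λ of Borel measures on X with M_p(Λ) = 0 such that ∫_X |f_{j_k} − f| dν → 0 as k → ∞ for every Borel measure ν on X not belonging to Λ. -/
/-!
Pass to a subsequence with `2^{ip} ∫ |f_{j_i} - f|^p dμ ≤ 2^{-i}` and put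
`g = sup_i 2^i |f_{j_i} - f|`; then `∫ g^p dμ ≤ ∑ 2^{-i} < ∞`. Every measure `ν` with
`∫ g dν < ∞` satisfies `∫ |f_{j_i} - f| dν ≤ 2^{-i} ∫ g dν → 0`, and the family of measures with
`∫ g dν = ∞` has `p`-modulus zero, because `ε g` is admissible for it for every `ε > 0`.
-/

open MeasureTheory Set Filter
open scoped ENNReal

/-- The `p`-modulus (with respect to the reference measure `μ`) of a family `Λ` of
Borel measures: the infimum of `∫ f^p dμ` over Borel `f : X → [0,∞]` with
`∫ f dν ≥ 1` for every `ν ∈ Λ`. -/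
noncomputable def pModulus {X : Type*} [MeasurableSpace X] (μ : Measure X) (p : ℝ)
    (Λ : Set (Measure X)) : ℝ≥0∞ :=
  ⨅ (f : X → ℝ≥0∞) (_ : Measurable f) (_ : ∀ ν ∈ Λ, 1 ≤ ∫⁻ x, f x ∂ν),
    ∫⁻ x, f x ^ p ∂μ

section
variable {X : Type*} [MeasurableSpace X]

theorem pModulus_le_lintegral_rpow {μ : Measure X} {p : ℝ} {Λ : Set (Measure X)}
    {g : X → ℝ≥0∞} (hg : Measurable g) (hadm : ∀ ν ∈ Λ, 1 ≤ ∫⁻ x, g x ∂ν) :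
    pModulus μ p Λ ≤ ∫⁻ x, g x ^ p ∂μ :=
  iInf₂_le_of_le g hg (iInf_le _ hadm)

theorem lintegral_const_mul_rpow {μ : Measure X} {p : ℝ} (hp : 0 ≤ p) (c : ℝ≥0∞)
    {g : X → ℝ≥0∞} (hg : Measurable g) :
    ∫⁻ x, (c * g x) ^ p ∂μ = c ^ p * ∫⁻ x, g x ^ p ∂μ := by
  simp_rw [ENNReal.mul_rpow_of_nonneg _ _ hp]
  exact lintegral_const_mul _ (hg.pow_const p)

theorem pModulus_setOf_lintegral_eq_top {μ : Measure X} {p : ℝ} (hp : 0 < p)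
    {g : X → ℝ≥0∞} (hg : Measurable g) (hgp : ∫⁻ x, g x ^ p ∂μ ≠ ∞) :
    pModulus μ p {ν | ∫⁻ x, g x ∂ν = ∞} = 0 := by
  have hadm (n : ℕ) : pModulus μ p {ν | ∫⁻ x, g x ∂ν = ∞} ≤
      ((n : ℝ≥0∞)⁻¹) ^ p * ∫⁻ x, g x ^ p ∂μ := by
    rw [← lintegral_const_mul_rpow hp.le _ hg]
    refine pModulus_le_lintegral_rpow (hg.const_mul _) fun ν hν => ?_
    rw [lintegral_const_mul _ hg, hν.out, ENNReal.mul_top (by simp)]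
    exact le_top
  have hlim : Tendsto (fun n : ℕ => ((n : ℝ≥0∞)⁻¹) ^ p * ∫⁻ x, g x ^ p ∂μ) atTop (nhds 0) := by
    have hpow := ((ENNReal.continuous_rpow_const (y := p)).tendsto 0).comp
      ENNReal.tendsto_inv_nat_nhds_zero
    simpa [ENNReal.zero_rpow_of_pos hp] using ENNReal.Tendsto.mul_const hpow (Or.inr hgp)
  exact le_antisymm (ge_of_tendsto' hlim hadm) zero_le

theorem lintegral_iSup_rpow_le_tsum {μ : Measure X} {p : ℝ} (hp : 0 < p)
    {F : ℕ → X → ℝ≥0∞} (hF : ∀ i, Measurable (F i)) :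
    ∫⁻ x, (⨆ i, F i x) ^ p ∂μ ≤ ∑' i, ∫⁻ x, F i x ^ p ∂μ := by
  have hpow (x : X) : (⨆ i, F i x) ^ p = ⨆ i, F i x ^ p :=
    (ENNReal.orderIsoRpow p hp).map_iSup _
  calc ∫⁻ x, (⨆ i, F i x) ^ p ∂μ ≤ ∫⁻ x, ∑' i, F i x ^ p ∂μ :=
        lintegral_mono fun x => (hpow x).trans_le (iSup_le fun i => ENNReal.le_tsum i)
    _ = ∑' i, ∫⁻ x, F i x ^ p ∂μ := lintegral_tsum fun i => ((hF i).pow_const p).aemeasurable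

theorem tendsto_lintegral_of_lintegral_iSup_two_pow_mul_ne_top {ν : Measure X}
    {H : ℕ → X → ℝ≥0∞} (h : ∫⁻ x, ⨆ i, 2 ^ i * H i x ∂ν ≠ ∞) :
    Tendsto (fun i => ∫⁻ x, H i x ∂ν) atTop (nhds 0) := by
  set C := ∫⁻ x, ⨆ i, 2 ^ i * H i x ∂ν
  have hle (i : ℕ) : ∫⁻ x, H i x ∂ν ≤ 2⁻¹ ^ i * C := by
    rw [← ENNReal.inv_pow, ← ENNReal.div_eq_inv_mul,
      ENNReal.le_div_iff_mul_le (by simp) (by simp), mul_comm,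
      ← lintegral_const_mul' _ _ (by simp)]
    exact lintegral_mono fun x => le_iSup (fun i => (2 : ℝ≥0∞) ^ i * H i x) i
  have hlim : Tendsto (fun i : ℕ => (2 : ℝ≥0∞)⁻¹ ^ i * C) atTop (nhds 0) := by
    simpa using ENNReal.Tendsto.mul_const
      (ENNReal.tendsto_pow_atTop_nhds_zero_of_lt_one (by norm_num)) (Or.inr h)
  exact tendsto_of_tendsto_of_tendsto_of_le_of_le tendsto_const_nhds hlim (fun _ => zero_le) hle

end

theorem stmt10_general {X : Type*} [MeasurableSpace X]
    (μ : Measure X) (p : ℝ) (hp : 1 ≤ p)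
    (f : X → ℝ) (hf : Measurable f)
    (fj : ℕ → X → ℝ) (hfj : ∀ j, Measurable (fj j))
    (hconv : Tendsto (fun j => ∫⁻ x, ENNReal.ofReal |fj j x - f x| ^ p ∂μ)
      atTop (nhds 0)) :
    ∃ k : ℕ → ℕ, StrictMono k ∧ ∃ Λ : Set (Measure X), pModulus μ p Λ = 0 ∧
      ∀ ν : Measure X, ν ∉ Λ →
        Tendsto (fun i => ∫⁻ x, ENNReal.ofReal |fj (k i) x - f x| ∂ν)
          atTop (nhds 0) := by
  have hp₀ : 0 < p := zero_lt_one.trans_le hp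
  set H : ℕ → X → ℝ≥0∞ := fun j x => ENNReal.ofReal |fj j x - f x|
  have hH (j : ℕ) : Measurable (H j) := ((hfj j).sub hf).abs.ennreal_ofReal
  obtain ⟨k, hk, hsmall⟩ : ∃ k : ℕ → ℕ, StrictMono k ∧
      ∀ i, ((2 : ℝ≥0∞) ^ i) ^ p * ∫⁻ x, H (k i) x ^ p ∂μ ≤ 2⁻¹ ^ i := by
    refine extraction_forall_of_eventually
      (P := fun i j => ((2 : ℝ≥0∞) ^ i) ^ p * ∫⁻ x, H j x ^ p ∂μ ≤ 2⁻¹ ^ i) fun i => ?_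
    have hlim : Tendsto (fun j => ((2 : ℝ≥0∞) ^ i) ^ p * ∫⁻ x, H j x ^ p ∂μ) atTop (nhds 0) := by
      simpa using ENNReal.Tendsto.const_mul hconv (Or.inr (by simp))
    exact hlim.eventually (eventually_le_nhds (ENNReal.pow_pos (by simp) i))
  set g : X → ℝ≥0∞ := fun x => ⨆ i, 2 ^ i * H (k i) x
  have hg : Measurable g := .iSup fun i => (hH (k i)).const_mul _
  refine ⟨k, hk, {ν | ∫⁻ x, g x ∂ν = ∞}, pModulus_setOf_lintegral_eq_top hp₀ hg ?_,
    fun ν hν => tendsto_lintegral_of_lintegral_iSup_two_pow_mul_ne_top hν⟩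
  refine ne_top_of_le_ne_top ?_ <| calc
    ∫⁻ x, g x ^ p ∂μ ≤ ∑' i, ∫⁻ x, (2 ^ i * H (k i) x) ^ p ∂μ :=
        lintegral_iSup_rpow_le_tsum hp₀ fun i => (hH (k i)).const_mul _
    _ = ∑' i, ((2 : ℝ≥0∞) ^ i) ^ p * ∫⁻ x, H (k i) x ^ p ∂μ := by
        simp_rw [lintegral_const_mul_rpow hp₀.le _ (hH _)]
    _ ≤ ∑' i : ℕ, (2 : ℝ≥0∞)⁻¹ ^ i := ENNReal.tsum_le_tsum hsmall
  rw [ENNReal.tsum_geometric]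
  simp

/-- Fuglede's lemma. Let `f` be Borel and let `(f_j)` be a sequence
of Borel functions converging to `f` in `L^p(X,μ)`, `1 ≤ p < ∞`. Then there is a
subsequence `(f_{j_k})` and a family `Λ` of Borel measures with `M_p(Λ) = 0` such that
`∫ |f_{j_k} - f| dν → 0` for every Borel measure `ν ∉ Λ`. -/
theorem stmt10 {X : Type*} [MetricSpace X] [MeasurableSpace X] [BorelSpace X]
    (μ : Measure X) (p : ℝ) (hp : 1 ≤ p)
    (f : X → ℝ) (hf : Measurable f)
    (fj : ℕ → X → ℝ) (hfj : ∀ j, Measurable (fj j))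
    (hconv : Tendsto (fun j => ∫⁻ x, ENNReal.ofReal |fj j x - f x| ^ p ∂μ)
      atTop (nhds 0)) :
    ∃ k : ℕ → ℕ, StrictMono k ∧ ∃ Λ : Set (Measure X), pModulus μ p Λ = 0 ∧
      ∀ ν : Measure X, ν ∉ Λ →
        Tendsto (fun i => ∫⁻ x, ENNReal.ofReal |fj (k i) x - f x| ∂ν)
          atTop (nhds 0) :=
  stmt10_general μ p hp f hf fj hfj hconv
end

section
/- Let n ≥ 1, let μ be a nonzero finite Borel measure on ℝ^n, let B ⊆ ℝ^n be a Borel set with positive Lebesgue measure, and let q ≥ 1. For x ∈ ℝ^n, let μ_x denote the pushforward of μ under the translation y ↦ y + x. Then the family Γ = {μ_x : x ∈ B} has positive q-modulus with respect to Lebesgue measure: there exists c > 0 such that every Borel function f : ℝ^n → [0,∞] satisfying ∫_{ℝ^n} f dμ_x ≥ 1 for every x ∈ B also satisfies ∫_{ℝ^n} f^q dx ≥ c. -/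
open MeasureTheory Set
open scoped ENNReal

/-- Hölder-type bound: the integral of `g` against a measure is bounded by
`(∫ g^q)^{1/q} * (ν univ)^{1-1/q}` for `q ≥ 1`. -/
lemma holder_aux {α : Type*} [MeasurableSpace α] (ν : Measure α) (g : α → ℝ≥0∞)
    (hg : Measurable g) {q : ℝ} (hq : 1 ≤ q) :
    ∫⁻ a, g a ∂ν ≤ (∫⁻ a, g a ^ q ∂ν) ^ (1 / q) * (ν Set.univ) ^ (1 - 1 / q) := by
  rcases eq_or_lt_of_le hq with hq1 | hq1
  · subst hq1
    simp [ENNReal.rpow_one]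
  · set p := Real.conjExponent q with hp
    have hpq : q.HolderConjugate p := Real.HolderConjugate.conjExponent hq1
    have h := ENNReal.lintegral_mul_le_Lp_mul_Lq ν hpq hg.aemeasurable
      (aemeasurable_const (b := (1 : ℝ≥0∞)))
    simp only [mul_one, Pi.mul_apply, Pi.one_apply] at h
    have h1 : (fun _ : α => (1 : ℝ≥0∞) ^ p) = fun _ => (1 : ℝ≥0∞) := by
      funext a; simp
    rw [h1, lintegral_const] at h
    have hinv : 1 / p = 1 - 1 / q := by
      have := hpq.inv_add_inv_eq_one
      rw [one_div, one_div]; linarith [hpq.inv_add_inv_eq_one]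
    rw [one_mul] at h
    rwa [hinv] at h

/-- Let `μ` be a nonzero finite Borel measure on `ℝ^n`, `B ⊆ ℝ^n`
Borel with positive Lebesgue measure, and `q ≥ 1`. Writing `μ_x` for the pushforward
of `μ` under the translation `y ↦ y + x`, the family `{μ_x : x ∈ B}` has positive
`q`-modulus with respect to Lebesgue measure: there is `c > 0` such that every Borel
`f : ℝ^n → [0,∞]` with `∫ f dμ_x ≥ 1` for all `x ∈ B` satisfies `∫ f^q dx ≥ c`. -/
theorem stmt11 (n : ℕ) (hn : 1 ≤ n)
    (μ : Measure (EuclideanSpace ℝ (Fin n))) [IsFiniteMeasure μ] (hμ : μ ≠ 0)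
    (B : Set (EuclideanSpace ℝ (Fin n))) (hB : MeasurableSet B)
    (hBpos : 0 < volume B) (q : ℝ) (hq : 1 ≤ q) :
    ∃ c : ℝ≥0∞, 0 < c ∧
      ∀ f : EuclideanSpace ℝ (Fin n) → ℝ≥0∞, Measurable f →
        (∀ x ∈ B, 1 ≤ ∫⁻ z, f z ∂(μ.map (· + x))) →
        c ≤ ∫⁻ z, f z ^ q ∂volume := by
  have hq0 : 0 < q := lt_of_lt_of_le one_pos hq
  -- choose a bounded piece B' of B with positive finite volume
  obtain ⟨R, hR⟩ : ∃ R : ℕ, 0 < volume (B ∩ Metric.closedBall 0 R) := by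
    by_contra h
    push_neg at h
    simp only [le_zero_iff] at h
    have : B = ⋃ R : ℕ, B ∩ Metric.closedBall 0 R := by
      ext x
      simp only [Set.mem_iUnion, Set.mem_inter_iff, Metric.mem_closedBall, dist_zero_right]
      constructor
      · intro hx
        obtain ⟨R, hRx⟩ := exists_nat_ge ‖x‖
        exact ⟨R, hx, hRx⟩
      · rintro ⟨R, hx, -⟩; exact hx
    have : volume B = 0 := by
      rw [this]
      exact le_zero_iff.mp ((measure_iUnion_le _).trans (by simp [h]))
    exact absurd this hBpos.ne'
  set B' := B ∩ Metric.closedBall (0 : EuclideanSpace ℝ (Fin n)) R with hB'def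
  have hB'meas : MeasurableSet B' := hB.inter measurableSet_closedBall
  set v := volume B' with hv
  have hv0 : v ≠ 0 := hR.ne'
  have hvtop : v ≠ ⊤ :=
    ne_top_of_le_ne_top (measure_closedBall_lt_top).ne (measure_mono Set.inter_subset_right)
  set M := μ Set.univ with hM
  have hM0 : M ≠ 0 := by
    intro h
    exact hμ (by simpa [hM] using h)
  have hMtop : M ≠ ⊤ := measure_ne_top μ _
  refine ⟨v / M ^ q, ?_, ?_⟩
  · exact ENNReal.div_pos hv0 (ENNReal.rpow_ne_top_of_nonneg hq0.le hMtop)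
  intro f hf hf1
  set I := ∫⁻ z, f z ^ q ∂volume with hI
  rcases eq_or_ne I ⊤ with hItop | hItop
  · rw [hItop]; exact le_top
  -- step 1: v ≤ double integral
  have key : v ≤ M * (I ^ (1 / q) * v ^ (1 - 1 / q)) := by
    have step1 : v ≤ ∫⁻ x in B', ∫⁻ y, f (y + x) ∂μ ∂volume := by
      calc v = ∫⁻ _ in B', (1 : ℝ≥0∞) ∂volume := by simp [hv]
        _ ≤ _ := by
          refine setLIntegral_mono' hB'meas fun x hx => ?_
          have hx' : x ∈ B := hx.1
          have := hf1 x hx'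
          rwa [lintegral_map hf (measurable_add_const x)] at this
    have hmeas2 : Measurable (Function.uncurry fun x y => f (y + x)) :=
      hf.comp (measurable_snd.add measurable_fst)
    have step2 : ∫⁻ x in B', ∫⁻ y, f (y + x) ∂μ ∂volume
        = ∫⁻ y, ∫⁻ x in B', f (y + x) ∂volume ∂μ :=
      lintegral_lintegral_swap (hmeas2.aemeasurable)
    have step3 : ∀ y, ∫⁻ x in B', f (y + x) ∂volume ≤ I ^ (1 / q) * v ^ (1 - 1 / q) := by
      intro y
      have h1 : ∫⁻ x in B', f (y + x) ∂volume
          ≤ (∫⁻ x in B', f (y + x) ^ q ∂volume) ^ (1 / q)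
            * ((volume.restrict B') Set.univ) ^ (1 - 1 / q) :=
        holder_aux (volume.restrict B') _ (hf.comp (measurable_const_add y)) hq
      have h2 : (volume.restrict B') Set.univ = v := by
        simp [Measure.restrict_apply, hv]
      have h3 : ∫⁻ x in B', f (y + x) ^ q ∂volume ≤ I := by
        calc ∫⁻ x in B', f (y + x) ^ q ∂volume
            ≤ ∫⁻ x, f (y + x) ^ q ∂volume := setLIntegral_le_lintegral _ _
          _ = I := lintegral_add_left_eq_self (fun x => f x ^ q) y
      calc ∫⁻ x in B', f (y + x) ∂volume
          ≤ (∫⁻ x in B', f (y + x) ^ q ∂volume) ^ (1 / q) * v ^ (1 - 1 / q) := by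
            rw [← h2]; exact h1
        _ ≤ I ^ (1 / q) * v ^ (1 - 1 / q) := by
            gcongr
    calc v ≤ ∫⁻ x in B', ∫⁻ y, f (y + x) ∂μ ∂volume := step1
      _ = ∫⁻ y, ∫⁻ x in B', f (y + x) ∂volume ∂μ := step2
      _ ≤ ∫⁻ _, I ^ (1 / q) * v ^ (1 - 1 / q) ∂μ := lintegral_mono step3
      _ = M * (I ^ (1 / q) * v ^ (1 - 1 / q)) := by rw [lintegral_const, mul_comm]
  -- algebra: deduce v / M^q ≤ I
  have hvsplit : v = v ^ (1 / q) * v ^ (1 - 1 / q) := by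
    rw [← ENNReal.rpow_add _ _ hv0 hvtop]
    norm_num
  have hcancel : v ^ (1 / q) ≤ M * I ^ (1 / q) := by
    have hne0 : v ^ (1 - 1 / q) ≠ 0 := by
      simp [ENNReal.rpow_eq_zero_iff, hv0, hvtop]
    have hnetop : v ^ (1 - 1 / q) ≠ ⊤ := by
      simp [ENNReal.rpow_eq_top_iff, hv0, hvtop]
    have h' : v ^ (1 / q) * v ^ (1 - 1 / q) ≤ M * I ^ (1 / q) * v ^ (1 - 1 / q) := by
      rw [← hvsplit, mul_assoc]; exact key
    exact (ENNReal.mul_le_mul_iff_left hne0 hnetop).mp h'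
  have hpow : v ≤ M ^ q * I := by
    have h := ENNReal.rpow_le_rpow hcancel hq0.le
    rw [← ENNReal.rpow_mul, ENNReal.mul_rpow_of_nonneg _ _ hq0.le, ← ENNReal.rpow_mul,
      one_div, inv_mul_cancel₀ hq0.ne', ENNReal.rpow_one, ENNReal.rpow_one] at h
    exact h
  exact ENNReal.div_le_of_le_mul' hpow
end
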